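/- arXiv:math/0609202 — 6 statements merged into one kernel-verified Lean document; each statement's English description precedes it below -/
import Mathlib

section
/- Let φ satisfy the regularity assumptions: φ is C² and strictly positive on [1,∞), eventually strictly decreasing, φ decays faster than any power (ω^l·φ(ω) → 0 as ω → ∞ for every l > 0), and for every μ with 0 < |μ| ≤ 1 there is ω₀(μ) such that the second derivative of φ^μ has no zero on (ω₀(μ),∞). Let ω be a random variable with density φ and β > 0. Then the random variable Y := φ(ω)^{−β} has power-law-like tail with exponent 1/β: lim_{y→∞} ln Pr{Y > y}/ln y = −1/β. Equivalently, Y has asymptotic density ψ(y) = y^{−(1+1/β)+o_y(1)} (Lemma 2 i). -/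
/-!
Write `T(ω) = ∫_{(ω,∞)} φ`. For large `y` the event `{Y > y}` is `{W > ω}` with
`φ(ω) = y^{-1/β}`, so it suffices that `log T(ω) = (1 + o(1)) log φ(ω)`, i.e. that
`c_δ φ(ω)^{1+δ} ≤ T(ω) ≤ φ(ω)^{1-δ}` eventually, for every `δ ∈ (0,1]`.

The upper bound follows from `φ ≤ φ(ω)^{1-δ} φ^δ` on `(ω,∞)` and from `φ(x)^δ ≤ x^{-2}`.
For the lower bound, the hypothesis on `(φ^δ)''` makes `φ^δ` eventually convex (a positive,
strictly decreasing function cannot be eventually concave). Comparing with the secant over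
`[ω-1, ω]` shows `φ^δ ≥ φ(ω)^δ/2` on an interval of length `φ(ω)^δ/2` to the right of `ω`,
whence `T(ω) ≥ (φ(ω)^δ/2)^{1+1/δ}`.
-/

open MeasureTheory Filter ProbabilityTheory Set Topology

lemma ConcaveOn.monotoneOn_Ioi_of_nonneg {f : ℝ → ℝ} {a : ℝ} (hf : ConcaveOn ℝ (Ioi a) f)
    (h0 : ∀ x ∈ Ioi a, 0 ≤ f x) : MonotoneOn f (Ioi a) := by
  intro x hx y hy hxy
  by_contra! hlt
  have hxy : x < y := hxy.lt_of_ne (by rintro rfl; exact lt_irrefl _ hlt)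
  set s := (f y - f x) / (y - x)
  have hs : s < 0 := div_neg_of_neg_of_pos (by linarith) (by linarith)
  -- beyond `y` the graph stays below the secant line through `x` and `y`, which turns negative
  set t := f y / -s + 1 with ht
  have ht0 : 0 < t := by have := div_nonneg (h0 y hy) (neg_nonneg.2 hs.le); linarith
  have hz : y + t ∈ Ioi a := by simp only [mem_Ioi] at hy ⊢; linarith
  have hslope := hf.slope_anti_adjacent hx hz hxy (by linarith)
  rw [add_sub_cancel_left, div_le_iff₀ ht0] at hslope
  have hst : s * t = -f y + s := by rw [ht]; field_simp [hs.ne]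
  linarith [h0 _ hz]

lemma convexOn_Ioi_of_deriv2_ne_zero {g : ℝ → ℝ} {a : ℝ} (hg : ContDiffOn ℝ 2 g (Ioi a))
    (h0 : ∀ x ∈ Ioi a, 0 ≤ g x) (hanti : StrictAntiOn g (Ioi a))
    (h2 : ∀ x ∈ Ioi a, deriv (deriv g) x ≠ 0) : ConvexOn ℝ (Ioi a) g := by
  have hg' : ContDiffOn ℝ 1 (deriv g) (Ioi a) := hg.deriv_of_isOpen isOpen_Ioi (by norm_num)
  have hd : DifferentiableOn ℝ g (Ioi a) := hg.differentiableOn (by norm_num)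
  have hd' : DifferentiableOn ℝ (deriv g) (Ioi a) := hg'.differentiableOn one_ne_zero
  have hc : ContinuousOn (deriv (deriv g)) (Ioi a) :=
    (hg'.deriv_of_isOpen isOpen_Ioi (m := 0) (by norm_num)).continuousOn
  refine convexOn_of_deriv2_nonneg' (convex_Ioi a) hd hd' fun x hx => ?_
  by_contra! hneg
  -- a continuous nonvanishing `g''` has constant sign, so `g` would be concave
  have hconc : ConcaveOn ℝ (Ioi a) g := by
    refine concaveOn_of_deriv2_nonpos' (convex_Ioi a) hd hd' fun y hy => ?_
    by_contra! hpos
    obtain ⟨z, hz, hz0⟩ := isPreconnected_Ioi.intermediate_value hx hy hc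
      ⟨hneg.le, hpos.le⟩
    exact h2 z hz hz0
  have hx1 : x + 1 ∈ Ioi a := by simp only [mem_Ioi] at hx ⊢; linarith
  exact (hanti hx hx1 (by linarith)).not_ge
    (hconc.monotoneOn_Ioi_of_nonneg h0 hx hx1 (by linarith))

lemma eventually_le_rpow_neg {f : ℝ → ℝ} {l : ℝ}
    (h : Tendsto (fun x => x ^ l * f x) atTop (𝓝 0)) : ∀ᶠ x in atTop, f x ≤ x ^ (-l) := by
  filter_upwards [h.eventually_le_const zero_lt_one, eventually_gt_atTop 0] with x hx hx0
  have hxl : 0 < x ^ l := Real.rpow_pos_of_pos hx0 l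
  calc f x = (x ^ l)⁻¹ * (x ^ l * f x) := by field_simp
    _ ≤ x ^ (-l) := by
      rw [Real.rpow_neg hx0.le]; exact mul_le_of_le_one_right (inv_nonneg.2 hxl.le) hx

lemma Real.lt_rpow_neg_iff {t y β : ℝ} (ht : 0 ≤ t) (hy : 0 < y) (hβ : 0 < β) :
    y < t ^ (-β) ↔ 0 < t ∧ t < y ^ (-β⁻¹) := by
  rcases ht.eq_or_lt with rfl | ht
  · simp [Real.zero_rpow (neg_ne_zero.2 hβ.ne'), hy.le.not_gt]
  · rw [← inv_neg, Real.lt_rpow_inv_iff_of_neg ht hy (neg_neg_of_pos hβ)]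
    exact ⟨fun h => ⟨ht, h⟩, And.right⟩

lemma tendsto_div_of_abs_sub_mul_le {f g : ℝ → ℝ} {L : ℝ} (hg : Tendsto g atTop atTop)
    (h : ∀ δ > 0, ∃ C, ∀ᶠ y in atTop, |f y - L * g y| ≤ δ * g y + C) :
    Tendsto (fun y => f y / g y) atTop (𝓝 L) := by
  rw [Metric.tendsto_nhds]
  intro η hη
  obtain ⟨C, hC⟩ := h (η / 2) (by positivity)
  filter_upwards [hC, hg.eventually_gt_atTop 0, hg.eventually_gt_atTop (2 * C / η)]
    with y hy hg0 hgC
  rw [div_lt_iff₀ hη] at hgC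
  rw [Real.dist_eq, div_sub' hg0.ne', abs_div, abs_of_pos hg0, div_lt_iff₀ hg0,
    mul_comm (g y) L]
  linarith

lemma toReal_measure_preimage_eq_setIntegral {Ω : Type*} [MeasurableSpace Ω] {P : Measure Ω}
    {W : Ω → ℝ} {φ : ℝ → ℝ} (hW : Measurable W)
    (hdist : P.map W = volume.withDensity fun x => ENNReal.ofReal (φ x))
    {s : Set ℝ} (hs : MeasurableSet s) (hint : IntegrableOn φ s) (h0 : ∀ x ∈ s, 0 ≤ φ x) :
    (P (W ⁻¹' s)).toReal = ∫ x in s, φ x := by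
  rw [← Measure.map_apply hW hs, hdist, withDensity_apply _ hs,
    ← ofReal_integral_eq_lintegral_ofReal hint ((ae_restrict_iff' hs).2 (ae_of_all _ h0)),
    ENNReal.toReal_ofReal (setIntegral_nonneg hs h0)]

section Density

variable {φ : ℝ → ℝ} {x₀ : ℝ}

lemma exists_convexOn_rpow {μ : ℝ} (hpos : ∀ x, 1 ≤ x → 0 < φ x)
    (hC2 : ContDiffOn ℝ 2 φ (Ici 1)) (hanti : StrictAntiOn φ (Ici x₀)) (hμ : 0 < μ)
    (hμ2 : ∃ ω₀, ∀ x, ω₀ < x → deriv (deriv fun t => φ t ^ μ) x ≠ 0) :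
    ∃ a, 1 ≤ a ∧ ConvexOn ℝ (Ioi a) fun t => φ t ^ μ := by
  obtain ⟨ω₀, hω₀⟩ := hμ2
  set a := max (max 1 x₀) ω₀
  have h1 : 1 ≤ a := (le_max_left _ _).trans (le_max_left _ _)
  have hx₀ : x₀ ≤ a := (le_max_right _ _).trans (le_max_left _ _)
  refine ⟨a, h1, convexOn_Ioi_of_deriv2_ne_zero ?_ ?_ ?_ ?_⟩
  · exact fun x (hx : a < x) => ((hC2.contDiffAt (Ici_mem_nhds (by linarith))).rpow_const_of_ne
      (hpos x (by linarith)).ne').contDiffWithinAt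
  · exact fun x (hx : a < x) => Real.rpow_nonneg (hpos x (by linarith)).le μ
  · intro x (hx : a < x) y (hy : a < y) hxy
    exact Real.rpow_lt_rpow (hpos y (by linarith)).le
      (hanti (mem_Ici.2 (by linarith)) (mem_Ici.2 (by linarith)) hxy) hμ
  · exact fun x (hx : a < x) => hω₀ x ((le_max_right _ _).trans_lt hx)

lemma rpow_div_two_rpow_le_setIntegral_Ioi {a ω δ : ℝ} (hδ : 0 < δ)
    (hconv : ConvexOn ℝ (Ioi a) fun t => φ t ^ δ) (hω : a + 1 < ω)
    (hpos : ∀ x ∈ Ioi a, 0 < φ x) (h1 : φ (ω - 1) ≤ 1) (hint : IntegrableOn φ (Ioi ω)) :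
    (φ ω ^ δ / 2) ^ (δ⁻¹ + 1) ≤ ∫ x in Ioi ω, φ x := by
  set h := φ ω ^ δ / 2 with hh_def
  have hφω : 0 < φ ω := hpos ω (by simp only [mem_Ioi]; linarith)
  have hh : 0 < h := by positivity
  -- the secant of the convex `φ ^ δ` over `[ω - 1, ω]` has slope `≥ -1`
  have hψ : ∀ t ∈ Ioc ω (ω + h), h ≤ φ t ^ δ := by
    rintro t ⟨hωt, hth⟩
    have hslope := hconv.slope_mono_adjacent (x := ω - 1) (y := ω) (z := t)
      (by simp only [mem_Ioi]; linarith) (by simp only [mem_Ioi]; linarith) (by linarith) hωt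
    rw [sub_sub_cancel, div_one, le_div_iff₀ (by linarith)] at hslope
    have : φ (ω - 1) ^ δ ≤ 1 :=
      Real.rpow_le_one (hpos _ (by simp only [mem_Ioi]; linarith)).le h1 hδ.le
    nlinarith [mul_nonneg (by linarith [Real.rpow_nonneg hφω.le δ] :
      0 ≤ φ ω ^ δ - φ (ω - 1) ^ δ + 1) (by linarith : 0 ≤ t - ω)]
  have hφ : ∀ t ∈ Ioc ω (ω + h), h ^ δ⁻¹ ≤ φ t := by
    intro t ht
    have hφt : 0 ≤ φ t := (hpos t (by simp only [mem_Ioi]; linarith [ht.1])).le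
    calc h ^ δ⁻¹ ≤ (φ t ^ δ) ^ δ⁻¹ := Real.rpow_le_rpow hh.le (hψ t ht) (by positivity)
      _ = φ t := Real.rpow_rpow_inv hφt hδ.ne'
  calc h ^ (δ⁻¹ + 1) = h ^ δ⁻¹ * volume.real (Ioc ω (ω + h)) := by
        rw [Real.volume_real_Ioc_of_le (by linarith), Real.rpow_add_one hh.ne']; ring
    _ ≤ ∫ x in Ioc ω (ω + h), φ x :=
        setIntegral_ge_of_const_le_real measurableSet_Ioc measure_Ioc_lt_top.ne hφ
          (hint.mono_set Ioc_subset_Ioi_self)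
    _ ≤ ∫ x in Ioi ω, φ x :=
        setIntegral_mono_set hint
          ((ae_restrict_iff' measurableSet_Ioi).2 (ae_of_all _ fun x hx =>
            (hpos x (by simp only [mem_Ioi] at hx ⊢; linarith)).le))
          Ioc_subset_Ioi_self.eventuallyLE

lemma setIntegral_Ioi_le_rpow {ω δ : ℝ} (hδ0 : 0 < δ) (hδ1 : δ ≤ 1) (hω : 1 ≤ ω)
    (h0 : ∀ x ∈ Ioi ω, 0 ≤ φ x) (hanti : ∀ x ∈ Ioi ω, φ x ≤ φ ω)
    (hdecay : ∀ x ∈ Ioi ω, φ x ≤ x ^ (-(2 / δ))) (hint : IntegrableOn φ (Ioi ω)) :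
    ∫ x in Ioi ω, φ x ≤ φ ω ^ (1 - δ) := by
  have hω0 : 0 < ω := by linarith
  have hφω : 0 ≤ φ ω := (h0 _ (lt_add_one ω)).trans (hanti _ (lt_add_one ω))
  have hpt : ∀ x ∈ Ioi ω, φ x ≤ φ ω ^ (1 - δ) * x ^ (-2 : ℝ) := by
    intro x (hx : ω < x)
    have hx0 : 0 < x := by linarith
    have hδ : φ x ^ δ ≤ x ^ (-2 : ℝ) :=
      calc φ x ^ δ ≤ (x ^ (-(2 / δ))) ^ δ := Real.rpow_le_rpow (h0 x hx) (hdecay x hx) hδ0.le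
        _ = x ^ (-2 : ℝ) := by rw [← Real.rpow_mul hx0.le]; field_simp
    calc φ x = φ x ^ (1 - δ) * φ x ^ δ := by
          rw [← Real.rpow_add' (h0 x hx) (by norm_num), sub_add_cancel, Real.rpow_one]
      _ ≤ φ ω ^ (1 - δ) * x ^ (-2 : ℝ) :=
          mul_le_mul (Real.rpow_le_rpow (h0 x hx) (hanti x hx) (by linarith)) hδ
            (Real.rpow_nonneg (h0 x hx) _) (Real.rpow_nonneg hφω _)
  calc ∫ x in Ioi ω, φ x ≤ ∫ x in Ioi ω, φ ω ^ (1 - δ) * x ^ (-2 : ℝ) :=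
        setIntegral_mono_on hint ((integrableOn_Ioi_rpow_of_lt (by norm_num) hω0).const_mul _)
          measurableSet_Ioi hpt
    _ = φ ω ^ (1 - δ) * ω ^ (-1 : ℝ) := by
        rw [integral_const_mul, integral_Ioi_rpow_of_lt (by norm_num) hω0]; norm_num
    _ ≤ φ ω ^ (1 - δ) :=
        mul_le_of_le_one_right (Real.rpow_nonneg hφω _)
          (Real.rpow_le_one_of_one_le_of_nonpos hω (by norm_num))

lemma eventually_tail_bounds (hpos : ∀ x, 1 ≤ x → 0 < φ x)
    (hC2 : ContDiffOn ℝ 2 φ (Ici 1)) (hanti : StrictAntiOn φ (Ici x₀))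
    (hdecay : ∀ l : ℝ, 0 < l → Tendsto (fun x : ℝ => x ^ l * φ x) atTop (𝓝 0))
    (hint : IntegrableOn φ (Ici 1)) {δ : ℝ} (hδ0 : 0 < δ) (hδ1 : δ ≤ 1)
    (hδ2 : ∃ ω₀, ∀ x, ω₀ < x → deriv (deriv fun t => φ t ^ δ) x ≠ 0) :
    ∀ᶠ ω in atTop, (φ ω ^ δ / 2) ^ (δ⁻¹ + 1) ≤ ∫ x in Ioi ω, φ x ∧
      ∫ x in Ioi ω, φ x ≤ φ ω ^ (1 - δ) := by
  obtain ⟨a, ha, hconv⟩ := exists_convexOn_rpow hpos hC2 hanti hδ0 hδ2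
  obtain ⟨b, hb⟩ :=
    eventually_atTop.1 (eventually_le_rpow_neg (hdecay (2 / δ) (by positivity)))
  filter_upwards [eventually_gt_atTop (a + 1), eventually_ge_atTop x₀,
    eventually_ge_atTop (b + 1), eventually_ge_atTop 2] with ω haω hx₀ω hbω h2ω
  have hint' : IntegrableOn φ (Ioi ω) :=
    hint.mono_set fun x (hx : ω < x) => mem_Ici.2 (by linarith)
  constructor
  · refine rpow_div_two_rpow_le_setIntegral_Ioi hδ0 hconv haω
      (fun x (hx : a < x) => hpos x (by linarith)) ?_ hint'
    calc φ (ω - 1) ≤ (ω - 1) ^ (-(2 / δ)) := hb _ (by linarith)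
      _ ≤ 1 := Real.rpow_le_one_of_one_le_of_nonpos (by linarith) (by simp; positivity)
  · refine setIntegral_Ioi_le_rpow hδ0 hδ1 (by linarith)
      (fun x (hx : ω < x) => (hpos x (by linarith)).le)
      (fun x (hx : ω < x) => (hanti (mem_Ici.2 hx₀ω) (mem_Ici.2 (by linarith)) hx).le)
      (fun x (hx : ω < x) => hb x (by linarith)) hint'

lemma exists_eventually_abs_log_tail_sub_log_le (hpos : ∀ x, 1 ≤ x → 0 < φ x)
    (hC2 : ContDiffOn ℝ 2 φ (Ici 1))
    (hanti : StrictAntiOn φ (Ici x₀))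
    (hdecay : ∀ l : ℝ, 0 < l → Tendsto (fun x : ℝ => x ^ l * φ x) atTop (𝓝 0))
    (hmu : ∀ μ : ℝ, μ ≠ 0 → |μ| ≤ 1 → ∃ ω₀ : ℝ, ∀ x : ℝ, ω₀ < x →
      deriv (deriv (fun t : ℝ => φ t ^ μ)) x ≠ 0)
    (hint : IntegrableOn φ (Ici 1)) {δ : ℝ} (hδ : 0 < δ) :
    ∃ C, ∀ᶠ ω in atTop,
      |Real.log (∫ x in Ioi ω, φ x) - Real.log (φ ω)| ≤ δ * |Real.log (φ ω)| + C := by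
  set δ₁ := min δ 1
  have hδ₁ : 0 < δ₁ := lt_min hδ one_pos
  refine ⟨(δ₁⁻¹ + 1) * Real.log 2, ?_⟩
  have hδ₁1 : δ₁ ≤ 1 := min_le_right _ _
  filter_upwards [eventually_tail_bounds hpos hC2 hanti hdecay hint hδ₁ hδ₁1
      (hmu δ₁ hδ₁.ne' (by rwa [abs_of_pos hδ₁])),
    eventually_le_rpow_neg (hdecay 1 one_pos), eventually_ge_atTop 1]
    with ω ⟨hlow, hup⟩ hφ1 hω
  have hφ : 0 < φ ω := hpos ω hω
  have hL : Real.log (φ ω) ≤ 0 := Real.log_nonpos hφ.le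
    (hφ1.trans (Real.rpow_le_one_of_one_le_of_nonpos hω (by norm_num)))
  have hT : 0 < ∫ x in Ioi ω, φ x := lt_of_lt_of_le (by positivity) hlow
  have hlogup : Real.log (∫ x in Ioi ω, φ x) ≤ (1 - δ₁) * Real.log (φ ω) := by
    rw [← Real.log_rpow hφ]; exact Real.log_le_log hT hup
  have hloglow : (1 + δ₁) * Real.log (φ ω) - (δ₁⁻¹ + 1) * Real.log 2 ≤
      Real.log (∫ x in Ioi ω, φ x) := by
    calc (1 + δ₁) * Real.log (φ ω) - (δ₁⁻¹ + 1) * Real.log 2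
        = Real.log ((φ ω ^ δ₁ / 2) ^ (δ₁⁻¹ + 1)) := by
          rw [Real.log_rpow (by positivity), Real.log_div (by positivity) two_ne_zero,
            Real.log_rpow hφ]
          field_simp
      _ ≤ _ := Real.log_le_log (by positivity) hlow
  have hδL : δ₁ * -Real.log (φ ω) ≤ δ * -Real.log (φ ω) :=
    mul_le_mul_of_nonneg_right (min_le_left _ _) (neg_nonneg.2 hL)
  have hC : 0 ≤ (δ₁⁻¹ + 1) * Real.log 2 := by positivity
  rw [abs_of_nonpos hL, abs_sub_le_iff]
  constructor <;> nlinarith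

lemma eventually_setOf_pos_lt_eq_Ioi (hsupp : ∀ x, x < 1 → φ x = 0)
    (hpos : ∀ x, 1 ≤ x → 0 < φ x) (hcont : ContinuousOn φ (Ici 1))
    (hanti : StrictAntiOn φ (Ici x₀)) (hlim : Tendsto φ atTop (𝓝 0)) (A : ℝ) :
    ∀ᶠ ε in 𝓝[>] 0, ∃ ω, A ≤ ω ∧ φ ω = ε ∧ {x | 0 < φ x ∧ φ x < ε} = Ioi ω := by
  set b := max (max A x₀) 1
  have hb1 : 1 ≤ b := le_max_right _ _
  have hbA : A ≤ b := (le_max_left _ _).trans (le_max_left _ _)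
  have hbx₀ : x₀ ≤ b := (le_max_right _ _).trans (le_max_left _ _)
  obtain ⟨z, hz, hzmin⟩ := isCompact_Icc.exists_isMinOn (nonempty_Icc.2 hb1)
    (hcont.mono Icc_subset_Ici_self)
  filter_upwards [Ioo_mem_nhdsGT (hpos z hz.1)] with ε ⟨hε0, hεz⟩
  obtain ⟨c, hφc, hbc⟩ :=
    ((hlim.eventually_lt_const hε0).and (eventually_ge_atTop b)).exists
  have hεb : ε ≤ φ b := hεz.le.trans (hzmin ⟨hb1, le_rfl⟩)
  obtain ⟨ω, ⟨hbω, hωc⟩, hφω⟩ := intermediate_value_Icc' hbc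
    (hcont.mono fun x hx => mem_Ici.2 (hb1.trans hx.1)) ⟨hφc.le, hεb⟩
  refine ⟨ω, hbA.trans hbω, hφω, Set.ext fun x => ⟨fun ⟨hx0, hxε⟩ => ?_, fun hx => ?_⟩⟩
  · show ω < x
    by_contra! hxω
    have hx1 : 1 ≤ x := by by_contra! hx1; exact hx0.ne' (hsupp x hx1)
    rcases le_total x b with hxb | hbx
    · exact (hεz.trans_le (hzmin ⟨hx1, hxb⟩)).not_gt hxε
    · exact (hφω ▸ hanti.antitoneOn (mem_Ici.2 (hbx₀.trans hbx))
        (mem_Ici.2 (hbx₀.trans hbω)) hxω).not_gt hxε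
  · have hωx : ω < x := hx
    exact ⟨hpos x (by linarith),
      hφω ▸ hanti (mem_Ici.2 (hbx₀.trans hbω)) (mem_Ici.2 (by linarith)) hωx⟩

end Density

theorem stmt_1_general
    {Ω : Type*} [MeasureSpace Ω]
    (φ : ℝ → ℝ) (W : Ω → ℝ) (β : ℝ)
    (hβ : 0 < β)
    (hφ_supp : ∀ x : ℝ, x < 1 → φ x = 0)
    (hφ_pos : ∀ x : ℝ, 1 ≤ x → 0 < φ x)
    (hφ_int : ∫ x in Set.Ici (1 : ℝ), φ x = 1)
    (hφ_C2 : ContDiffOn ℝ 2 φ (Set.Ici 1))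
    (hφ_anti : ∃ x₀ : ℝ, StrictAntiOn φ (Set.Ici x₀))
    (hφ_decay : ∀ l : ℝ, 0 < l →
      Tendsto (fun x : ℝ => x ^ l * φ x) atTop (nhds 0))
    (hφ_mu : ∀ μ : ℝ, μ ≠ 0 → |μ| ≤ 1 → ∃ ω₀ : ℝ, ∀ x : ℝ, ω₀ < x →
      deriv (deriv (fun t : ℝ => φ t ^ μ)) x ≠ 0)
    (hW_meas : Measurable W)
    (hW_dist : Measure.map W ℙ
      = MeasureTheory.volume.withDensity (fun x => ENNReal.ofReal (φ x))) :
    Tendsto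
      (fun y : ℝ =>
        Real.log (ℙ {a : Ω | y < φ (W a) ^ (-β)}).toReal / Real.log y)
      atTop (nhds (-(1 / β))) := by
  obtain ⟨x₀, hanti⟩ := hφ_anti
  have hint : IntegrableOn φ (Ici 1) := by
    by_contra h
    rw [integral_undef h] at hφ_int
    exact zero_ne_one hφ_int
  have hφ0 : ∀ x, 0 ≤ φ x := fun x =>
    (lt_or_ge x 1).elim (fun h => (hφ_supp x h).ge) fun h => (hφ_pos x h).le
  have hlim : Tendsto φ atTop (𝓝 0) :=
    tendsto_of_tendsto_of_tendsto_of_le_of_le' tendsto_const_nhds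
      (tendsto_rpow_neg_atTop one_pos) (Eventually.of_forall hφ0)
      (eventually_le_rpow_neg (hφ_decay 1 one_pos))
  have hlevel : Tendsto (fun y : ℝ => y ^ (-β⁻¹)) atTop (𝓝[>] 0) :=
    tendsto_nhdsWithin_iff.2 ⟨tendsto_rpow_neg_atTop (inv_pos.2 hβ),
      (eventually_gt_atTop 0).mono fun y hy => Real.rpow_pos_of_pos hy _⟩
  rw [one_div]
  refine tendsto_div_of_abs_sub_mul_le Real.tendsto_log_atTop fun δ hδ => ?_
  obtain ⟨C, hC⟩ := exists_eventually_abs_log_tail_sub_log_le hφ_pos hφ_C2 hanti hφ_decay hφ_mu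
    hint (mul_pos hβ hδ)
  obtain ⟨A, hA⟩ := eventually_atTop.1 hC
  refine ⟨C, ?_⟩
  filter_upwards [hlevel.eventually (eventually_setOf_pos_lt_eq_Ioi hφ_supp hφ_pos
    hφ_C2.continuousOn hanti hlim (max A 1)), eventually_gt_atTop 1]
    with y ⟨ω, hω, hφω, hS⟩ hy
  have hevent : {a : Ω | y < φ (W a) ^ (-β)} = W ⁻¹' Ioi ω := by
    rw [← hS]; ext a; exact Real.lt_rpow_neg_iff (hφ0 _) (by linarith) hβ
  have hlog : Real.log (φ ω) = -β⁻¹ * Real.log y := by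
    rw [hφω, Real.log_rpow (by linarith)]
  rw [hevent, toReal_measure_preimage_eq_setIntegral hW_meas hW_dist measurableSet_Ioi
    (hint.mono_set (Ioi_subset_Ici (le_of_max_le_right hω))) fun x _ => hφ0 x, ← hlog]
  calc _ ≤ β * δ * |Real.log (φ ω)| + C := hA ω (le_of_max_le_left hω)
    _ = δ * Real.log y + C := by
      rw [hlog, abs_mul, abs_neg, abs_inv, abs_of_pos hβ, abs_of_pos (Real.log_pos hy)]
      field_simp

/-- **Lemma 2 i.** If `φ` is a `C²` probability density, strictly positive on `[1,∞)`,
eventually strictly decreasing, decaying faster than any power, and such that the second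
derivative of `φ^μ` is eventually nonvanishing for every `0 < |μ| ≤ 1`, then for a random
variable `W` with density `φ` and `β > 0`, the random variable `Y = φ(W)^{-β}` has a
power-law-like tail with exponent `1/β`:
`log Pr{Y > y} / log y → -1/β` as `y → ∞`. -/
theorem stmt_1
    {Ω : Type*} [MeasureSpace Ω] [IsProbabilityMeasure (ℙ : Measure Ω)]
    (φ : ℝ → ℝ) (W : Ω → ℝ) (β : ℝ)
    (hβ : 0 < β)
    (hφ_supp : ∀ x : ℝ, x < 1 → φ x = 0)
    (hφ_pos : ∀ x : ℝ, 1 ≤ x → 0 < φ x)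
    (hφ_int : ∫ x in Set.Ici (1 : ℝ), φ x = 1)
    (hφ_C2 : ContDiffOn ℝ 2 φ (Set.Ici 1))
    (hφ_anti : ∃ x₀ : ℝ, StrictAntiOn φ (Set.Ici x₀))
    (hφ_decay : ∀ l : ℝ, 0 < l →
      Tendsto (fun x : ℝ => x ^ l * φ x) atTop (nhds 0))
    (hφ_mu : ∀ μ : ℝ, μ ≠ 0 → |μ| ≤ 1 → ∃ ω₀ : ℝ, ∀ x : ℝ, ω₀ < x →
      deriv (deriv (fun t : ℝ => φ t ^ μ)) x ≠ 0)
    (hW_meas : Measurable W)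
    (hW_dist : Measure.map W ℙ
      = MeasureTheory.volume.withDensity (fun x => ENNReal.ofReal (φ x))) :
    Tendsto
      (fun y : ℝ =>
        Real.log (ℙ {a : Ω | y < φ (W a) ^ (-β)}).toReal / Real.log y)
      atTop (nhds (-(1 / β))) :=
  stmt_1_general φ W β hβ hφ_supp hφ_pos hφ_int hφ_C2 hφ_anti hφ_decay hφ_mu hW_meas hW_dist
end

section
/- Let φ satisfy the regularity assumptions: φ is C² and strictly positive on [1,∞), eventually strictly decreasing, φ decays faster than any power (ω^l·φ(ω) → 0 as ω → ∞ for every l > 0), and for every μ with 0 < |μ| ≤ 1 there is ω₀(μ) such that the second derivative of φ^μ has no zero on (ω₀(μ),∞). Then the density and its tail have the same logarithmic decay: lim_{z→∞} ln φ(z)/ln F*(z) = 1, where F*(z) = ∫_z^∞ φ(ω)dω. Equivalently, φ((F*)⁻¹(1/y)) = y^{−1+o_y(1)} as y → ∞. -/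
/-!
For every `ε ∈ (0, 1)` the tail `F z = ∫_z^∞ φ` is eventually squeezed between
`c φ(z)^(1+ε)` and `C φ(z)^(1-ε)`; since `log φ(z) → -∞`, taking logarithms makes
`log F` asymptotically equivalent to `log φ`.

Upper bound: where `φ` is decreasing, `φ(t) = φ(t)^(1-ε) φ(t)^ε ≤ φ(z)^(1-ε) φ(t)^ε` for `t > z`,
and `φ^ε` is integrable at infinity because `φ` decays faster than any power.

Lower bound: by Darboux, `(φ^ε)''` has constant sign; a concave function cannot stay positive
while tending to `0`, so `g = φ^ε` is convex and `g' ≥ -K` eventually. Then `g ≥ g(z)/2` on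
`[z, z + g(z)/(2K)]`, so `F z ≥ g(z)/(2K) · 2^(-1/ε) φ(z)`, a multiple of `φ(z)^(1+ε)`.
-/

open MeasureTheory Filter Set Asymptotics Topology Real

theorem isEquivalent_of_affine_bounds {α : Type*} {l : Filter α} {u v : α → ℝ}
    (hv : Tendsto v l atBot)
    (hlower : ∀ ε ∈ Ioo (0 : ℝ) 1, ∃ c, ∀ᶠ x in l, c + (1 + ε) * v x ≤ u x)
    (hupper : ∀ ε ∈ Ioo (0 : ℝ) 1, ∃ C, ∀ᶠ x in l, u x ≤ C + (1 - ε) * v x) :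
    u ~[l] v := by
  refine IsLittleO.of_bound fun δ hδ => ?_
  set ε := min (δ / 2) (1 / 2)
  have hε : ε ∈ Ioo (0 : ℝ) 1 := ⟨by positivity, (min_le_right _ _).trans_lt (by norm_num)⟩
  have hεδ : ε ≤ δ / 2 := min_le_left _ _
  obtain ⟨c, hc⟩ := hlower ε hε
  obtain ⟨C, hC⟩ := hupper ε hε
  filter_upwards [hc, hC, hv.eventually_le_atBot (-(2 * (|c| + |C|) / δ))] with x hcx hCx hvx
  have hv0 : v x ≤ 0 := hvx.trans (neg_nonpos.2 (by positivity))
  have hconst : |c| + |C| ≤ δ / 2 * -v x := by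
    rw [le_neg, div_le_iff₀ hδ] at hvx
    linarith
  have hεv : ε * -v x ≤ δ / 2 * -v x := mul_le_mul_of_nonneg_right hεδ (by linarith)
  rw [Pi.sub_apply, Real.norm_eq_abs, Real.norm_eq_abs, abs_of_nonpos hv0, abs_sub_le_iff]
  constructor <;> nlinarith [le_abs_self c, neg_abs_le c, le_abs_self C, neg_abs_le C]

theorem isEquivalent_log_of_rpow_bounds {α : Type*} {l : Filter α} {f F : α → ℝ}
    (hf : Tendsto f l (𝓝[>] 0))
    (hlower : ∀ ε ∈ Ioo (0 : ℝ) 1, ∃ c > 0, ∀ᶠ x in l, c * f x ^ (1 + ε) ≤ F x)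
    (hupper : ∀ ε ∈ Ioo (0 : ℝ) 1, ∃ C, ∀ᶠ x in l, F x ≤ C * f x ^ (1 - ε)) :
    (fun x => log (F x)) ~[l] fun x => log (f x) := by
  have hf_pos : ∀ᶠ x in l, 0 < f x := hf self_mem_nhdsWithin
  obtain ⟨c₀, hc₀, hF₀⟩ := hlower (1 / 2) ⟨by norm_num, by norm_num⟩
  have hF_pos : ∀ᶠ x in l, 0 < F x := by
    filter_upwards [hf_pos, hF₀] with x hfx hFx
    exact lt_of_lt_of_le (by positivity) hFx
  refine isEquivalent_of_affine_bounds (tendsto_log_nhdsGT_zero.comp hf) (fun ε hε => ?_)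
    (fun ε hε => ?_)
  · obtain ⟨c, hc, hcF⟩ := hlower ε hε
    refine ⟨log c, ?_⟩
    filter_upwards [hf_pos, hcF] with x hfx hFx
    calc log c + (1 + ε) * log (f x) = log (c * f x ^ (1 + ε)) := by
          rw [log_mul hc.ne' (rpow_pos_of_pos hfx _).ne', log_rpow hfx]
      _ ≤ log (F x) := log_le_log (by positivity) hFx
  · obtain ⟨C, hCF⟩ := hupper ε hε
    refine ⟨log C, ?_⟩
    filter_upwards [hf_pos, hF_pos, hCF] with x hfx hFx hCFx
    have hC : 0 < C := pos_of_mul_pos_left (hFx.trans_le hCFx) (by positivity)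
    calc log (F x) ≤ log (C * f x ^ (1 - ε)) := log_le_log hFx hCFx
      _ = log C + (1 - ε) * log (f x) := by
          rw [log_mul hC.ne' (rpow_pos_of_pos hfx _).ne', log_rpow hfx]

theorem not_antitoneOn_deriv_of_pos_of_tendsto_zero {g : ℝ → ℝ} {a : ℝ}
    (hg : DifferentiableOn ℝ g (Ioi a)) (hpos : ∀ x ∈ Ioi a, 0 < g x)
    (h0 : Tendsto g atTop (𝓝 0)) : ¬ AntitoneOn (deriv g) (Ioi a) := by
  intro hanti
  have hc : a + 1 ∈ Ioi a := by simp
  obtain ⟨x, hgx, hcx⟩ :=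
    ((h0.eventually (gt_mem_nhds (hpos _ hc))).and (eventually_gt_atTop (a + 1))).exists
  have hsub : Icc (a + 1) x ⊆ Ioi a := fun t ht => lt_of_lt_of_le hc ht.1
  obtain ⟨ξ, hξ, hslope⟩ := exists_deriv_eq_slope g hcx (hg.continuousOn.mono hsub)
    (hg.mono (Ioo_subset_Icc_self.trans hsub))
  have hξa : ξ ∈ Ioi a := hsub (Ioo_subset_Icc_self hξ)
  have hneg : deriv g ξ < 0 := by
    rw [hslope]
    exact div_neg_of_neg_of_pos (by linarith) (by linarith [hξ.2])
  -- Beyond `ξ` the graph of `g` lies below its tangent at `ξ`, which crosses zero.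
  have hIci : Ici ξ ⊆ Ioi a := fun t ht => mem_Ioi.2 (lt_of_lt_of_le hξa ht)
  have htangent := (convex_Ici ξ).image_sub_le_mul_sub_of_deriv_le (hg.continuousOn.mono hIci)
    (by rw [interior_Ici]; exact hg.mono (Ioi_subset_Ici_self.trans hIci))
    (fun t ht => by
      rw [interior_Ici] at ht
      exact hanti hξa (hIci (mem_Ici.2 (le_of_lt ht))) (le_of_lt ht))
  set y := ξ + g ξ / -deriv g ξ
  have hξy : ξ ≤ y := le_add_of_nonneg_right (div_nonneg (hpos ξ hξa).le (by linarith))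
  have hgy := htangent ξ (mem_Ici.2 le_rfl) y hξy hξy
  have hcross : deriv g ξ * (y - ξ) = -g ξ := by
    simp only [y, add_sub_cancel_left]
    field_simp [hneg.ne]
  linarith [hpos y (hIci hξy)]

theorem monotoneOn_deriv_of_deriv_deriv_ne_zero {g : ℝ → ℝ} {a : ℝ}
    (hg : DifferentiableOn ℝ g (Ioi a)) (hg' : DifferentiableOn ℝ (deriv g) (Ioi a))
    (hpos : ∀ x ∈ Ioi a, 0 < g x) (h0 : Tendsto g atTop (𝓝 0))
    (hne : ∀ x ∈ Ioi a, deriv (deriv g) x ≠ 0) : MonotoneOn (deriv g) (Ioi a) := by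
  have hderiv : ∀ x ∈ Ioi a, HasDerivWithinAt (deriv g) (deriv (deriv g) x) (Ioi a) x :=
    fun x hx => ((hg' x hx).differentiableAt (isOpen_Ioi.mem_nhds hx)).hasDerivAt.hasDerivWithinAt
  rcases hasDerivWithinAt_forall_lt_or_forall_gt_of_forall_ne (convex_Ioi a) hderiv hne with
    hconcave | hconvex
  · exact absurd (antitoneOn_of_deriv_nonpos (convex_Ioi a) hg'.continuousOn
      (by rwa [interior_Ioi]) (by rw [interior_Ioi]; exact fun x hx => (hconcave x hx).le))
      (not_antitoneOn_deriv_of_pos_of_tendsto_zero hg hpos h0)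
  · exact monotoneOn_of_deriv_nonneg (convex_Ioi a) hg'.continuousOn
      (by rwa [interior_Ioi]) (by rw [interior_Ioi]; exact fun x hx => (hconvex x hx).le)

theorem exists_half_le_of_deriv_deriv_ne_zero {g : ℝ → ℝ} {a : ℝ}
    (hg : ContDiffOn ℝ 2 g (Ioi a)) (hpos : ∀ x ∈ Ioi a, 0 < g x) (h0 : Tendsto g atTop (𝓝 0))
    (hne : ∀ x ∈ Ioi a, deriv (deriv g) x ≠ 0) :
    ∃ K > 0, ∀ᶠ z in atTop, ∀ ω ∈ Icc z (z + g z / (2 * K)), g z / 2 ≤ g ω := by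
  have hd : DifferentiableOn ℝ g (Ioi a) := hg.differentiableOn (by norm_num)
  have hd' : DifferentiableOn ℝ (deriv g) (Ioi a) :=
    (hg.deriv_of_isOpen isOpen_Ioi (by norm_num : (1 : WithTop ℕ∞) + 1 ≤ 2)).differentiableOn
      (by norm_num)
  have hmono := monotoneOn_deriv_of_deriv_deriv_ne_zero hd hd' hpos h0 hne
  have hb : a + 1 ∈ Ioi a := by simp
  set K := |deriv g (a + 1)| + 1
  have hK0 : 0 < K := by positivity
  refine ⟨K, hK0, ?_⟩
  filter_upwards [eventually_ge_atTop (a + 1)] with z hz ω hω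
  have hIci : Ici z ⊆ Ioi a := fun t ht => mem_Ioi.2 (lt_of_lt_of_le hb (hz.trans ht))
  have hK : ∀ x ∈ interior (Ici z), -K ≤ deriv g x := fun x hx => by
    rw [interior_Ici] at hx
    have := hmono hb (hIci (mem_Ici.2 hx.le)) (hz.trans hx.le)
    linarith [neg_abs_le (deriv g (a + 1))]
  have hlin := (convex_Ici z).mul_sub_le_image_sub_of_le_deriv (hd.continuousOn.mono hIci)
    (by rw [interior_Ici]; exact hd.mono (Ioi_subset_Ici_self.trans hIci)) hK
    z (mem_Ici.2 le_rfl) ω hω.1 hω.1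
  have hlen : K * (ω - z) ≤ g z / 2 := by
    calc K * (ω - z) ≤ K * (g z / (2 * K)) := by gcongr; linarith [hω.2]
      _ = g z / 2 := by field_simp
  linarith

theorem exists_mul_rpow_le_setIntegral_Ioi {φ : ℝ → ℝ} {a μ : ℝ} (hμ : 0 < μ)
    (hφ : ContDiffOn ℝ 2 φ (Ioi a)) (hpos : ∀ x ∈ Ioi a, 0 < φ x)
    (hint : IntegrableOn φ (Ioi a)) (h0 : Tendsto φ atTop (𝓝 0))
    (hne : ∀ x ∈ Ioi a, deriv (deriv fun t => φ t ^ μ) x ≠ 0) :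
    ∃ c > 0, ∀ᶠ z in atTop, c * φ z ^ (1 + μ) ≤ ∫ t in Ioi z, φ t := by
  obtain ⟨K, hK, hhalf⟩ := exists_half_le_of_deriv_deriv_ne_zero
    (hφ.rpow_const_of_ne fun x hx => (hpos x hx).ne') (fun x hx => rpow_pos_of_pos (hpos x hx) μ)
    (by simpa [zero_rpow hμ.ne'] using h0.rpow_const (Or.inr hμ.le)) hne
  refine ⟨(2 * K * 2 ^ μ⁻¹)⁻¹, by positivity, ?_⟩
  filter_upwards [hhalf, eventually_gt_atTop a] with z hz hza
  set h := φ z ^ μ / (2 * K) with hh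
  have hφz := hpos z hza
  have hIoc : Ioc z (z + h) ⊆ Ioi a := fun t ht => mem_Ioi.2 (hza.trans ht.1)
  have hIoi : Ioi z ⊆ Ioi a := fun t ht => mem_Ioi.2 (hza.trans ht)
  have hlow : ∀ t ∈ Ioc z (z + h), φ z / 2 ^ μ⁻¹ ≤ φ t := fun t ht => by
    have := rpow_le_rpow (by positivity) (hz t (Ioc_subset_Icc_self ht)) (inv_nonneg.2 hμ.le)
    rwa [div_rpow (by positivity) zero_le_two, rpow_rpow_inv hφz.le hμ.ne',
      rpow_rpow_inv (hpos t (hIoc ht)).le hμ.ne'] at this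
  calc (2 * K * 2 ^ μ⁻¹)⁻¹ * φ z ^ (1 + μ) = φ z / 2 ^ μ⁻¹ * volume.real (Ioc z (z + h)) := by
        rw [volume_real_Ioc_of_le (by simp only [le_add_iff_nonneg_right, h]; positivity),
          rpow_add hφz, rpow_one, add_sub_cancel_left, hh]
        field_simp
    _ ≤ ∫ t in Ioc z (z + h), φ t := setIntegral_ge_of_const_le_real measurableSet_Ioc
        measure_Ioc_lt_top.ne hlow (hint.mono_set hIoc)
    _ ≤ ∫ t in Ioi z, φ t := setIntegral_mono_set (hint.mono_set hIoi)
        (ae_restrict_of_forall_mem measurableSet_Ioi fun t ht => (hpos t (hIoi ht)).le)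
        Ioc_subset_Ioi_self.eventuallyLE

theorem integrableAtFilter_rpow_of_tendsto_rpow_mul {φ : ℝ → ℝ} {l ε : ℝ} (hε : 0 ≤ ε)
    (hlε : 1 < l * ε) (hφ : StronglyMeasurableAtFilter φ atTop)
    (hdecay : Tendsto (fun x => x ^ l * φ x) atTop (𝓝 0)) :
    IntegrableAtFilter (fun x => φ x ^ ε) atTop := by
  obtain ⟨s, hs, hmeas⟩ := hφ
  refine IsBigO.integrableAtFilter (g := fun x : ℝ => x ^ (-(l * ε))) ?_
    ⟨s, hs, (hmeas.aemeasurable.pow_const ε).aestronglyMeasurable⟩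
    (integrableAtFilter_rpow_atTop_iff.2 (by linarith))
  refine IsBigO.of_bound 1 ?_
  have hsmall : ∀ᶠ x in atTop, |x ^ l * φ x| ≤ 1 :=
    (by simpa using hdecay.abs : Tendsto (fun x => |x ^ l * φ x|) atTop (𝓝 0)).eventually
      (ge_mem_nhds one_pos)
  filter_upwards [hsmall, eventually_gt_atTop 0] with x hx hx0
  have hxl : 0 < x ^ l := rpow_pos_of_pos hx0 l
  have hφx : |φ x| ≤ x ^ (-l) := by
    rw [abs_mul, abs_of_pos hxl, ← le_div_iff₀' hxl] at hx
    rwa [rpow_neg hx0.le, inv_eq_one_div]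
  calc ‖φ x ^ ε‖ ≤ |φ x| ^ ε := abs_rpow_le_abs_rpow _ _
    _ ≤ (x ^ (-l)) ^ ε := rpow_le_rpow (abs_nonneg _) hφx hε
    _ = 1 * ‖x ^ (-(l * ε))‖ := by
        rw [one_mul, norm_of_nonneg (rpow_nonneg hx0.le _), ← rpow_mul hx0.le, neg_mul]

theorem setIntegral_Ioi_le_mul_rpow {φ : ℝ → ℝ} {x₀ ε z : ℝ} (hε : ε ≤ 1)
    (hanti : AntitoneOn φ (Ici x₀)) (hnonneg : ∀ x ∈ Ici x₀, 0 ≤ φ x)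
    (hint : IntegrableOn (fun t => φ t ^ ε) (Ioi x₀)) (hz : x₀ ≤ z) :
    ∫ t in Ioi z, φ t ≤ (∫ t in Ioi x₀, φ t ^ ε) * φ z ^ (1 - ε) := by
  have hIoi : Ioi z ⊆ Ici x₀ := fun t ht => hz.trans ht.le
  have hbound : ∀ t ∈ Ioi z, φ t ≤ φ z ^ (1 - ε) * φ t ^ ε := fun t ht => by
    have hφt := hnonneg t (hIoi ht)
    calc φ t = φ t ^ (1 - ε) * φ t ^ ε := by
          rw [← rpow_add' hφt (by norm_num), sub_add_cancel, rpow_one]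
      _ ≤ φ z ^ (1 - ε) * φ t ^ ε := mul_le_mul_of_nonneg_right
          (rpow_le_rpow hφt (hanti hz (hIoi ht) ht.le) (by linarith)) (rpow_nonneg hφt _)
  calc ∫ t in Ioi z, φ t ≤ ∫ t in Ioi z, φ z ^ (1 - ε) * φ t ^ ε :=
        integral_mono_of_nonneg
          (ae_restrict_of_forall_mem measurableSet_Ioi fun t ht => hnonneg t (hIoi ht))
          ((hint.mono_set (Ioi_subset_Ioi hz)).const_mul _)
          (ae_restrict_of_forall_mem measurableSet_Ioi hbound)
    _ = φ z ^ (1 - ε) * ∫ t in Ioi z, φ t ^ ε := integral_const_mul _ _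
    _ ≤ φ z ^ (1 - ε) * ∫ t in Ioi x₀, φ t ^ ε := by
        refine mul_le_mul_of_nonneg_left (setIntegral_mono_set hint ?_
          (Ioi_subset_Ioi hz).eventuallyLE) (rpow_nonneg (hnonneg z hz) _)
        exact ae_restrict_of_forall_mem measurableSet_Ioi fun t ht =>
          rpow_nonneg (hnonneg t (mem_Ici.2 (le_of_lt ht))) _
    _ = (∫ t in Ioi x₀, φ t ^ ε) * φ z ^ (1 - ε) := mul_comm _ _

theorem exists_setIntegral_Ioi_le_mul_rpow {φ : ℝ → ℝ} {x₀ ε : ℝ} (hε : ε ≤ 1)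
    (hanti : AntitoneOn φ (Ici x₀)) (hnonneg : ∀ x ∈ Ici x₀, 0 ≤ φ x)
    (hint : IntegrableAtFilter (fun t => φ t ^ ε) atTop) :
    ∃ C, ∀ᶠ z in atTop, ∫ t in Ioi z, φ t ≤ C * φ z ^ (1 - ε) := by
  obtain ⟨s, hs, hint⟩ := hint
  obtain ⟨b, hb⟩ := mem_atTop_sets.1 hs
  set x₁ := max b x₀
  have hx₁ : Ici x₁ ⊆ Ici x₀ := Ici_subset_Ici.2 (le_max_right _ _)
  refine ⟨∫ t in Ioi x₁, φ t ^ ε, ?_⟩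
  filter_upwards [eventually_ge_atTop x₁] with z hz
  exact setIntegral_Ioi_le_mul_rpow hε (hanti.mono hx₁) (fun x hx => hnonneg x (hx₁ hx))
    (hint.mono_set fun t ht => hb t ((le_max_left _ _).trans ht.le)) hz

theorem stmt_3_general
    (φ : ℝ → ℝ)
    (hφ_pos : ∀ x : ℝ, 1 ≤ x → 0 < φ x)
    (hφ_int : ∫ x in Set.Ici (1 : ℝ), φ x = 1)
    (hφ_C2 : ContDiffOn ℝ 2 φ (Set.Ici 1))
    (hφ_anti : ∃ x₀ : ℝ, StrictAntiOn φ (Set.Ici x₀))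
    (hφ_decay : ∀ l : ℝ, 0 < l →
      Tendsto (fun x : ℝ => x ^ l * φ x) atTop (nhds 0))
    (hφ_mu : ∀ μ : ℝ, μ ≠ 0 → |μ| ≤ 1 → ∃ ω₀ : ℝ, ∀ x : ℝ, ω₀ < x →
      deriv (deriv (fun t : ℝ => φ t ^ μ)) x ≠ 0) :
    Tendsto
      (fun z : ℝ => Real.log (φ z) / Real.log (∫ t in Set.Ioi z, φ t))
      atTop (nhds 1) := by
  have hint : IntegrableOn φ (Ici 1) := by
    by_contra h
    rw [integral_undef h] at hφ_int
    exact zero_ne_one hφ_int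
  have hφ0 : Tendsto φ atTop (𝓝 0) := by
    refine squeeze_zero' ((eventually_ge_atTop 1).mono fun x hx => (hφ_pos x hx).le)
      ((eventually_ge_atTop 1).mono fun x hx => ?_) (by simpa using hφ_decay 1 one_pos)
    simpa using mul_le_mul_of_nonneg_right hx (hφ_pos x hx).le
  have hφ0' : Tendsto φ atTop (𝓝[>] 0) := tendsto_nhdsWithin_iff.2
    ⟨hφ0, (eventually_ge_atTop 1).mono fun x hx => hφ_pos x hx⟩
  have hlower : ∀ ε ∈ Ioo (0 : ℝ) 1,
      ∃ c > 0, ∀ᶠ z in atTop, c * φ z ^ (1 + ε) ≤ ∫ t in Ioi z, φ t := fun ε hε => by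
    obtain ⟨ω₀, hω₀⟩ := hφ_mu ε hε.1.ne' (by rw [abs_of_pos hε.1]; exact hε.2.le)
    have hIoi : Ioi (max ω₀ 1) ⊆ Ici 1 := fun x hx => mem_Ici.2 ((le_max_right _ _).trans hx.le)
    exact exists_mul_rpow_le_setIntegral_Ioi hε.1 (hφ_C2.mono hIoi)
      (fun x hx => hφ_pos x (hIoi hx)) (hint.mono_set hIoi) hφ0
      (fun x hx => hω₀ x ((le_max_left _ _).trans_lt hx))
  have hupper : ∀ ε ∈ Ioo (0 : ℝ) 1,
      ∃ C, ∀ᶠ z in atTop, ∫ t in Ioi z, φ t ≤ C * φ z ^ (1 - ε) := fun ε hε => by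
    obtain ⟨x₀, hanti⟩ := hφ_anti
    have hIci : Ici (max x₀ 1) ⊆ Ici x₀ := Ici_subset_Ici.2 (le_max_left _ _)
    have hlε : 1 < 2 / ε * ε := by rw [div_mul_cancel₀ _ hε.1.ne']; norm_num
    exact exists_setIntegral_Ioi_le_mul_rpow hε.2.le (hanti.antitoneOn.mono hIci)
      (fun x hx => (hφ_pos x ((le_max_right _ _).trans hx)).le)
      (integrableAtFilter_rpow_of_tendsto_rpow_mul hε.1.le hlε
        ⟨Ici 1, Ici_mem_atTop 1, hint.aestronglyMeasurable⟩ (hφ_decay _ (div_pos two_pos hε.1)))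
  have hequiv := isEquivalent_log_of_rpow_bounds hφ0' hlower hupper
  have hlogF := hequiv.symm.tendsto_atBot (tendsto_log_nhdsGT_zero.comp hφ0')
  exact (isEquivalent_iff_tendsto_one (hlogF.eventually_ne_atBot 0)).1 hequiv.symm

/-- Under the regularity assumptions on the density `φ` (C², positive on `[1,∞)`, eventually
strictly decreasing, faster than polynomial decay, eventually nonvanishing second derivative
of `φ^μ` for `0 < |μ| ≤ 1`), the density and its tail `F*(z) = ∫_z^∞ φ` have the same
logarithmic decay: `log φ(z) / log F*(z) → 1` as `z → ∞`. -/
theorem stmt_3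
    (φ : ℝ → ℝ)
    (hφ_supp : ∀ x : ℝ, x < 1 → φ x = 0)
    (hφ_pos : ∀ x : ℝ, 1 ≤ x → 0 < φ x)
    (hφ_int : ∫ x in Set.Ici (1 : ℝ), φ x = 1)
    (hφ_C2 : ContDiffOn ℝ 2 φ (Set.Ici 1))
    (hφ_anti : ∃ x₀ : ℝ, StrictAntiOn φ (Set.Ici x₀))
    (hφ_decay : ∀ l : ℝ, 0 < l →
      Tendsto (fun x : ℝ => x ^ l * φ x) atTop (nhds 0))
    (hφ_mu : ∀ μ : ℝ, μ ≠ 0 → |μ| ≤ 1 → ∃ ω₀ : ℝ, ∀ x : ℝ, ω₀ < x →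
      deriv (deriv (fun t : ℝ => φ t ^ μ)) x ≠ 0) :
    Tendsto
      (fun z : ℝ => Real.log (φ z) / Real.log (∫ t in Set.Ioi z, φ t))
      atTop (nhds 1) :=
  stmt_3_general φ hφ_pos hφ_int hφ_C2 hφ_anti hφ_decay hφ_mu
end

section
/- Let φ satisfy the regularity assumptions: φ is C² and strictly positive on [1,∞), eventually strictly decreasing, φ decays faster than any power (ω^l·φ(ω) → 0 as ω → ∞ for every l > 0), and for every μ with 0 < |μ| ≤ 1 there is ω₀(μ) such that the second derivative of φ^μ has no zero on (ω₀(μ),∞). Write φ = e^{−g}, so g = −ln φ is eventually strictly increasing with g(x)/ln x → ∞. Then the negative logarithmic derivative of φ is subexponential relative to g: for every μ > 0 there is x₀(μ) such that e^{−μ g(x)} < 1/g'(x) < e^{μ g(x)} for all x > x₀(μ). Equivalently, −φ(x)/Dφ(x) = φ(x)^{o_x(1)} as x → ∞ (Appendix lemma). -/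
/-!
Write `ψ_p = φ ^ p = exp (-p g)`, so that `ψ_p' = -p g' ψ_p`. Since `ψ_p''` has no zero on a tail,
Darboux's theorem makes `ψ_p'` monotone there; hence if `ψ_p' > M` failed on every tail, it would
hold that `ψ_p' ≤ M` on a tail and `ψ_p - M x` could not tend to `+∞`. For `ν = min μ 1` this is
absurd for `p = ν, M = -ν` (as `ψ_ν > 0`) and for `p = -ν, M = ν` (as `ψ_{-ν} ≥ x²` by the
superpolynomial decay of `φ`). The two resulting bounds read `g' e^{-νg} < 1 < g' e^{νg}`, and
`g ≥ 0` on a tail lets `ν` be replaced by `μ`.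
-/

open MeasureTheory Filter

open Set

theorem monotoneOn_or_antitoneOn_of_deriv_ne_zero {D : Set ℝ} (hD : Convex ℝ D) {h : ℝ → ℝ}
    (hd : ∀ x ∈ D, DifferentiableAt ℝ h x) (hne : ∀ x ∈ D, deriv h x ≠ 0) :
    MonotoneOn h D ∨ AntitoneOn h D := by
  have hcont : ContinuousOn h D := fun x hx => (hd x hx).continuousAt.continuousWithinAt
  have hdiff : DifferentiableOn ℝ h (interior D) := fun x hx =>
    (hd x (interior_subset hx)).differentiableWithinAt
  rcases hasDerivWithinAt_forall_lt_or_forall_gt_of_forall_ne hD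
    (fun x hx => (hd x hx).hasDerivAt.hasDerivWithinAt) hne with hneg | hpos
  · exact .inr (antitoneOn_of_deriv_nonpos hD hcont hdiff fun x hx => (hneg x (interior_subset hx)).le)
  · exact .inl (monotoneOn_of_deriv_nonneg hD hcont hdiff fun x hx => (hpos x (interior_subset hx)).le)

theorem Filter.Frequently.eventually_lt_of_monotoneOn_or_antitoneOn {h : ℝ → ℝ} {a M : ℝ}
    (hh : MonotoneOn h (Ioi a) ∨ AntitoneOn h (Ioi a)) (hfreq : ∃ᶠ x in atTop, M < h x) :
    ∀ᶠ x in atTop, M < h x := by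
  rcases hh with hmono | hanti
  · obtain ⟨b, hMb, hb⟩ := (hfreq.and_eventually (eventually_gt_atTop a)).exists
    filter_upwards [eventually_ge_atTop b] with x hbx
    exact hMb.trans_le (hmono hb (hb.trans_le hbx) hbx)
  · filter_upwards [eventually_gt_atTop a] with x hx
    obtain ⟨y, hMy, hxy⟩ := (hfreq.and_eventually (eventually_ge_atTop x)).exists
    exact hMy.trans_le (hanti hx (hx.trans_le hxy) hxy)

theorem frequently_lt_deriv_of_tendsto_sub_mul_atTop {f : ℝ → ℝ} {M : ℝ}
    (hf : ∀ᶠ x in atTop, DifferentiableAt ℝ f x)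
    (htend : Tendsto (fun x => f x - M * x) atTop atTop) :
    ∃ᶠ x in atTop, M < deriv f x := by
  intro hle
  simp only [not_lt] at hle
  obtain ⟨c, hc⟩ := (hf.and hle).exists_forall_of_atTop
  have hd : ∀ x ∈ Ici c, HasDerivAt (fun y => f y - M * y) (deriv f x - M) x := fun x hx => by
    simpa using (hc x hx).1.hasDerivAt.fun_sub ((hasDerivAt_id x).const_mul M)
  have hanti : AntitoneOn (fun y => f y - M * y) (Ici c) := by
    refine antitoneOn_of_deriv_nonpos (convex_Ici c)
      (fun x hx => (hd x hx).continuousAt.continuousWithinAt)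
      (fun x hx => (hd x (interior_subset hx)).differentiableAt.differentiableWithinAt)
      fun x hx => ?_
    rw [(hd x (interior_subset hx)).deriv, sub_nonpos]
    exact (hc x (interior_subset hx)).2
  obtain ⟨x, hx, hcx⟩ :=
    ((htend.eventually_gt_atTop (f c - M * c)).and (eventually_ge_atTop c)).exists
  exact hx.not_ge (hanti self_mem_Ici hcx hcx)

theorem eventually_lt_deriv_of_deriv_deriv_ne_zero {f : ℝ → ℝ} {a M : ℝ}
    (hf : ContDiffOn ℝ 2 f (Ioi a)) (hf'' : ∀ x ∈ Ioi a, deriv (deriv f) x ≠ 0)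
    (htend : Tendsto (fun x => f x - M * x) atTop atTop) :
    ∀ᶠ x in atTop, M < deriv f x := by
  rw [show (2 : WithTop ℕ∞) = 1 + 1 from rfl, contDiffOn_succ_iff_deriv_of_isOpen isOpen_Ioi] at hf
  obtain ⟨hdiff, -, hderiv⟩ := hf
  have hd : ∀ x ∈ Ioi a, DifferentiableAt ℝ f x := fun x hx =>
    (hdiff x hx).differentiableAt (Ioi_mem_nhds hx)
  have hd' : ∀ x ∈ Ioi a, DifferentiableAt ℝ (deriv f) x := fun x hx =>
    (hderiv.differentiableOn one_ne_zero x hx).differentiableAt (Ioi_mem_nhds hx)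
  refine Frequently.eventually_lt_of_monotoneOn_or_antitoneOn
    (monotoneOn_or_antitoneOn_of_deriv_ne_zero (convex_Ioi a) hd' hf'')
    (frequently_lt_deriv_of_tendsto_sub_mul_atTop ?_ htend)
  filter_upwards [eventually_gt_atTop a] with x hx using hd x hx

theorem deriv_rpow_const_eq_neg_mul_deriv_neg_log {φ : ℝ → ℝ} {x : ℝ}
    (hφ : DifferentiableAt ℝ φ x) (hpos : 0 < φ x) (p : ℝ) :
    deriv (fun t => φ t ^ p) x =
      -p * deriv (fun t => -Real.log (φ t)) x * Real.exp (-p * -Real.log (φ x)) := by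
  rw [(hφ.hasDerivAt.rpow_const (.inl hpos.ne')).deriv, (hφ.hasDerivAt.log hpos.ne').fun_neg.deriv,
    Real.rpow_sub_one hpos.ne', Real.rpow_def_of_pos hpos]
  field_simp

theorem rpow_mul_lt_rpow_neg_of_rpow_mul_lt_one {x y l ν : ℝ} (hx : 0 < x) (hy : 0 < y)
    (hν : 0 < ν) (h : x ^ l * y < 1) : x ^ (l * ν) < y ^ (-ν) := by
  have hyx : y < x ^ (-l) := by
    rwa [Real.rpow_neg hx.le, ← one_div, lt_div_iff₀' (Real.rpow_pos_of_pos hx l)]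
  calc x ^ (l * ν) = (x ^ (-l)) ^ (-ν) := by rw [← Real.rpow_mul hx.le, neg_mul_neg]
    _ < y ^ (-ν) := Real.rpow_lt_rpow_of_neg hy hyx (neg_lt_zero.2 hν)

theorem tendsto_sub_mul_atTop_of_nonneg {f : ℝ → ℝ} {M : ℝ} (hM : M < 0)
    (hf : ∀ᶠ x in atTop, 0 ≤ f x) : Tendsto (fun x => f x - M * x) atTop atTop := by
  refine tendsto_atTop_mono' _ ?_ (tendsto_id.const_mul_atTop (neg_pos.2 hM))
  filter_upwards [hf] with x hx
  change -M * x ≤ f x - M * x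
  linarith

theorem tendsto_rpow_neg_sub_mul_atTop {f : ℝ → ℝ} {ν M : ℝ} (hν : 0 < ν)
    (hpos : ∀ᶠ x in atTop, 0 < f x) (hdecay : Tendsto (fun x => x ^ (2 / ν) * f x) atTop (nhds 0)) :
    Tendsto (fun x => f x ^ (-ν) - M * x) atTop atTop := by
  refine tendsto_atTop_mono' _ ?_ tendsto_id
  filter_upwards [hdecay.eventually_lt_const one_pos, eventually_ge_atTop (|M| + 1), hpos]
    with x hx hxM hfx
  have hsq := rpow_mul_lt_rpow_neg_of_rpow_mul_lt_one (by linarith [abs_nonneg M]) hfx hν hx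
  rw [div_mul_cancel₀ 2 hν.ne', Real.rpow_two] at hsq
  change x ≤ f x ^ (-ν) - M * x
  nlinarith [le_abs_self M, abs_nonneg M]

theorem exp_neg_mul_lt_one_div_and_one_div_lt_exp_mul {ν μ G D : ℝ} (hνμ : ν ≤ μ) (hG : 0 ≤ G)
    (hupper : D * Real.exp (-ν * G) < 1) (hlower : 1 < D * Real.exp (ν * G)) :
    Real.exp (-μ * G) < 1 / D ∧ 1 / D < Real.exp (μ * G) := by
  have hD : 0 < D := pos_of_mul_pos_left (one_pos.trans hlower) (Real.exp_pos _).le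
  have hμG : Real.exp (-μ * G) ≤ Real.exp (-ν * G) := Real.exp_le_exp.2 (by nlinarith)
  have hνG : Real.exp (ν * G) ≤ Real.exp (μ * G) := Real.exp_le_exp.2 (by nlinarith)
  rw [lt_div_iff₀ hD, div_lt_iff₀ hD]
  constructor
  · calc Real.exp (-μ * G) * D ≤ Real.exp (-ν * G) * D := by gcongr
      _ < 1 := by rwa [mul_comm]
  · calc 1 < Real.exp (ν * G) * D := by rwa [mul_comm]
      _ ≤ Real.exp (μ * G) * D := by gcongr

theorem stmt_4_general
    (φ : ℝ → ℝ)
    (hφ_pos : ∀ x : ℝ, 1 ≤ x → 0 < φ x)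
    (hφ_C2 : ContDiffOn ℝ 2 φ (Set.Ici 1))
    (hφ_decay : ∀ l : ℝ, 0 < l →
      Tendsto (fun x : ℝ => x ^ l * φ x) atTop (nhds 0))
    (hφ_mu : ∀ μ : ℝ, μ ≠ 0 → |μ| ≤ 1 → ∃ ω₀ : ℝ, ∀ x : ℝ, ω₀ < x →
      deriv (deriv (fun t : ℝ => φ t ^ μ)) x ≠ 0)
    (g : ℝ → ℝ) (hg : g = fun x => -Real.log (φ x)) :
    ∀ μ : ℝ, 0 < μ → ∃ x₀ : ℝ, ∀ x : ℝ, x₀ < x →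
      Real.exp (-μ * g x) < 1 / deriv g x ∧ 1 / deriv g x < Real.exp (μ * g x) := by
  subst hg
  intro μ hμ
  obtain ⟨ν, hν0, hν1, hνμ⟩ : ∃ ν : ℝ, 0 < ν ∧ |ν| ≤ 1 ∧ ν ≤ μ :=
    ⟨min μ 1, lt_min hμ one_pos, abs_le.2 ⟨by linarith [lt_min hμ one_pos], min_le_right μ 1⟩,
      min_le_left μ 1⟩
  have hφ_pos' : ∀ᶠ x in atTop, 0 < φ x := eventually_ge_atTop 1 |>.mono hφ_pos
  have hsmooth (p ω : ℝ) : ContDiffOn ℝ 2 (fun t => φ t ^ p) (Ioi (max 1 ω)) :=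
    (hφ_C2.mono (Ioi_subset_Ici (le_max_left 1 ω))).rpow_const_of_ne
      fun x hx => (hφ_pos x (le_max_left 1 ω |>.trans hx.le)).ne'
  obtain ⟨ω₁, hω₁⟩ := hφ_mu ν hν0.ne' hν1
  obtain ⟨ω₂, hω₂⟩ := hφ_mu (-ν) (neg_ne_zero.2 hν0.ne') (by rwa [abs_neg])
  have hupper : ∀ᶠ x in atTop, -ν < deriv (fun t => φ t ^ ν) x :=
    eventually_lt_deriv_of_deriv_deriv_ne_zero (hsmooth ν ω₁)
      (fun x hx => hω₁ x ((le_max_right 1 ω₁).trans_lt hx))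
      (tendsto_sub_mul_atTop_of_nonneg (neg_lt_zero.2 hν0)
        (hφ_pos'.mono fun x hx => (Real.rpow_pos_of_pos hx ν).le))
  have hlower : ∀ᶠ x in atTop, ν < deriv (fun t => φ t ^ (-ν)) x :=
    eventually_lt_deriv_of_deriv_deriv_ne_zero (hsmooth (-ν) ω₂)
      (fun x hx => hω₂ x ((le_max_right 1 ω₂).trans_lt hx))
      (tendsto_rpow_neg_sub_mul_atTop hν0 hφ_pos' (hφ_decay _ (by positivity)))
  have hφ_lt_one : ∀ᶠ x in atTop, φ x < 1 := by
    filter_upwards [(hφ_decay 1 one_pos).eventually_lt_const one_pos, eventually_ge_atTop 1,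
      hφ_pos'] with x hx hx1 hφx
    rw [Real.rpow_one] at hx
    nlinarith
  obtain ⟨x₀, hx₀⟩ := (hupper.and (hlower.and (hφ_lt_one.and hφ_pos'))).exists_forall_of_atTop
  refine ⟨max x₀ 1, fun x hx => ?_⟩
  obtain ⟨hux, hlx, hφx1, hφx⟩ := hx₀ x ((le_max_left _ _).trans hx.le)
  have hdiff : DifferentiableAt ℝ φ x :=
    (hφ_C2.contDiffAt (Ici_mem_nhds ((le_max_right _ _).trans_lt hx))).differentiableAt two_ne_zero
  rw [deriv_rpow_const_eq_neg_mul_deriv_neg_log hdiff hφx] at hux hlx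
  simp only [neg_neg] at hlx
  refine exp_neg_mul_lt_one_div_and_one_div_lt_exp_mul hνμ ?_ (by nlinarith) (by nlinarith)
  linarith [Real.log_neg hφx hφx1]

/-- **Appendix lemma.** Under the regularity assumptions on `φ`, writing `φ = e^{-g}` with
`g = -log φ`, the negative logarithmic derivative of `φ` is subexponential relative to `g`:
for every `μ > 0` there is `x₀(μ)` with `e^{-μ g(x)} < 1/g'(x) < e^{μ g(x)}` for all
`x > x₀(μ)`; equivalently `-φ(x)/Dφ(x) = φ(x)^{o_x(1)}`. -/
theorem stmt_4
    (φ : ℝ → ℝ)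
    (hφ_supp : ∀ x : ℝ, x < 1 → φ x = 0)
    (hφ_pos : ∀ x : ℝ, 1 ≤ x → 0 < φ x)
    (hφ_int : ∫ x in Set.Ici (1 : ℝ), φ x = 1)
    (hφ_C2 : ContDiffOn ℝ 2 φ (Set.Ici 1))
    (hφ_anti : ∃ x₀ : ℝ, StrictAntiOn φ (Set.Ici x₀))
    (hφ_decay : ∀ l : ℝ, 0 < l →
      Tendsto (fun x : ℝ => x ^ l * φ x) atTop (nhds 0))
    (hφ_mu : ∀ μ : ℝ, μ ≠ 0 → |μ| ≤ 1 → ∃ ω₀ : ℝ, ∀ x : ℝ, ω₀ < x →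
      deriv (deriv (fun t : ℝ => φ t ^ μ)) x ≠ 0)
    (g : ℝ → ℝ) (hg : g = fun x => -Real.log (φ x)) :
    ∀ μ : ℝ, 0 < μ → ∃ x₀ : ℝ, ∀ x : ℝ, x₀ < x →
      Real.exp (-μ * g x) < 1 / deriv g x ∧ 1 / deriv g x < Real.exp (μ * g x) :=
  stmt_4_general φ hφ_pos hφ_C2 hφ_decay hφ_mu g hg
end

section
/- Let Y, Y₁, Y₂, … be i.i.d. positive random variables whose tail satisfies lim_{y→∞} ln Pr{Y > y}/ln y = −(θ−1) for some θ ∈ (1,2). Then almost surely lim_{n→∞} ln(∑_{i=1}^n Yᵢ)/ln n = 1/(θ−1); equivalently, the empirical mean satisfies (1/n)∑_{i=1}^n Yᵢ = n^{(2−θ)/(θ−1)+o(1)} almost surely. -/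
open MeasureTheory Filter ProbabilityTheory Set Real Topology
open scoped ENNReal

/-!
Write `S n = ∑_{i<n} Yᵢ` and `γ = θ - 1`, so that `P(Y > t) = t^(-γ + o(1))`. Since `S` is
monotone, it suffices to compare `S (2^k)` with powers of `2^k` and apply Borel–Cantelli.

Upper bound: truncating at level `u`, `P(S n > u) ≤ n P(Y > u) + n E[min(Y, u)] / u`, and the
tail bound gives `E[min(Y, u)] ≲ u^(1-γ')` for any `γ' < γ`, so `P(S n > u) ≲ n u^(-γ')`. At
`u = n^α` with `αγ' > 1` this is a negative power of `n = 2^k`, hence summable in `k`.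

Lower bound: `S n ≤ v` forces every `Yᵢ ≤ v`, which by independence has probability
`(1 - P(Y > v))^n ≤ exp(-n P(Y > v))`; at `v = n^β` with `βγ < 1` we have
`n P(Y > v) ≥ n^ε` for some `ε > 0`, again summable along `n = 2^k`.
-/

lemma eventually_le_rpow_of_tendsto_log_div_log {f : ℝ → ℝ} {r c : ℝ} (hf : ∀ y, 0 ≤ f y)
    (h : Tendsto (fun y => log (f y) / log y) atTop (𝓝 r)) (hrc : r < c) :
    ∀ᶠ y in atTop, f y ≤ y ^ c := by
  filter_upwards [h.eventually (gt_mem_nhds hrc), eventually_gt_atTop 1] with y hy hy1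
  rcases (hf y).eq_or_lt with h0 | hpos
  · rw [← h0]; positivity
  · rw [le_rpow_iff_log_le hpos (by linarith), ← div_le_iff₀ (log_pos hy1)]
    exact hy.le

lemma eventually_rpow_le_of_tendsto_log_div_log {f : ℝ → ℝ} {r d : ℝ} (hf : ∀ y, 0 ≤ f y)
    (h : Tendsto (fun y => log (f y) / log y) atTop (𝓝 r)) (hr : r < 0) (hdr : d < r) :
    ∀ᶠ y in atTop, y ^ d ≤ f y := by
  filter_upwards [h.eventually (lt_mem_nhds hdr), h.eventually (gt_mem_nhds hr),
    eventually_gt_atTop 1] with y hy hneg hy1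
  have hpos : 0 < f y := (hf y).lt_of_ne fun h0 => by simp [← h0] at hneg
  rw [rpow_le_iff_le_log (by linarith) hpos, ← le_div_iff₀ (log_pos hy1)]
  exact hy.le

lemma exists_le_mul_rpow_of_eventually_le_rpow {f : ℝ → ℝ} {c : ℝ} (hf : ∀ y, f y ≤ 1)
    (hc : c ≤ 0) (h : ∀ᶠ y in atTop, f y ≤ y ^ c) :
    ∃ C, 0 ≤ C ∧ ∀ t, 0 < t → f t ≤ C * t ^ c := by
  obtain ⟨y₀, hy₀⟩ := eventually_atTop.1 (h.and (eventually_ge_atTop 1))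
  have hy₀1 : 1 ≤ y₀ := (hy₀ y₀ le_rfl).2
  have hC : 1 ≤ y₀ ^ (-c) := one_le_rpow hy₀1 (by linarith)
  refine ⟨y₀ ^ (-c), by linarith, fun t ht => ?_⟩
  rcases le_or_gt y₀ t with hle | hlt
  · exact (hy₀ t hle).1.trans (le_mul_of_one_le_left (by positivity) hC)
  · calc f t ≤ 1 := hf t
      _ = y₀ ^ (-c) * y₀ ^ c := by rw [← rpow_add (by linarith)]; simp
      _ ≤ y₀ ^ (-c) * t ^ c := by gcongr 1; exact rpow_le_rpow_of_nonpos ht hlt.le hc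

lemma summable_two_pow_rpow {γ : ℝ} (hγ : γ < 0) : Summable fun k : ℕ => ((2 : ℝ) ^ k) ^ γ := by
  simp_rw [← rpow_pow_comm zero_le_two]
  exact summable_geometric_of_lt_one (by positivity) (rpow_lt_one_of_one_lt_of_neg one_lt_two hγ)

lemma exp_neg_le_inv {x : ℝ} (hx : 0 < x) : exp (-x) ≤ x⁻¹ := by
  rw [exp_neg]
  exact inv_anti₀ hx (by linarith [add_one_le_exp x])

section Probability

variable {Ω : Type*} [MeasurableSpace Ω] {μ : Measure Ω}

lemma ae_eventually_notMem_of_le_ofReal [IsFiniteMeasure μ] {s : ℕ → Set Ω} {g : ℕ → ℝ}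
    (hg0 : ∀ k, 0 ≤ g k) (hg : Summable g) (h : ∀ᶠ k in atTop, μ (s k) ≤ ENNReal.ofReal (g k)) :
    ∀ᵐ a ∂μ, ∀ᶠ k in atTop, a ∉ s k := by
  have hsum : Summable fun k => μ.real (s k) :=
    hg.of_norm_bounded_eventually_nat <| h.mono fun k hk => by
      rw [Real.norm_of_nonneg measureReal_nonneg]
      exact ENNReal.toReal_le_of_le_ofReal (hg0 k) hk
  apply ae_eventually_notMem
  rw [tsum_congr fun k => (ofReal_measureReal (μ := μ) (s := s k)).symm,
    ← ENNReal.ofReal_tsum_of_nonneg (fun _ => measureReal_nonneg) hsum]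
  exact ENNReal.ofReal_ne_top

lemma lintegral_ofReal_min_le_of_tail_le {X : Ω → ℝ} (hX : Measurable X) (hX0 : ∀ a, 0 ≤ X a)
    {C c : ℝ} (hC : 0 ≤ C) (hc : -1 < c)
    (htail : ∀ t, 0 < t → μ {a | t < X a} ≤ ENNReal.ofReal (C * t ^ c)) {u : ℝ} (hu : 0 ≤ u) :
    ∫⁻ a, ENNReal.ofReal (min (X a) u) ∂μ ≤ ENNReal.ofReal (C * u ^ (c + 1) / (c + 1)) := by
  rw [lintegral_eq_lintegral_meas_lt μ (ae_of_all _ fun a => le_min (hX0 a) hu)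
    (hX.min measurable_const).aemeasurable]
  have hmono : ∀ t ∈ Ioi (0 : ℝ), μ {a | t < min (X a) u}
      ≤ (Iio u).indicator (fun t => ENNReal.ofReal (C * t ^ c)) t := by
    intro t ht
    by_cases htu : t < u
    · rw [indicator_of_mem (mem_Iio.2 htu)]
      exact (measure_mono fun a (ha : t < min (X a) u) => ha.trans_le (min_le_left _ _)).trans
        (htail t ht)
    · have : {a | t < min (X a) u} = ∅ :=
        eq_empty_of_forall_notMem fun a ha => htu (ha.trans_le (min_le_right _ _))
      rw [this, measure_empty]
      exact zero_le
  have hint : IntegrableOn (fun t : ℝ => C * t ^ c) (Ioo 0 u) :=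
    ((((intervalIntegral.intervalIntegrable_rpow' (a := 0) (b := u) hc)).1).mono_set
      Ioo_subset_Ioc_self).const_mul C
  calc ∫⁻ t in Ioi 0, μ {a | t < min (X a) u}
      ≤ ∫⁻ t in Ioi 0, (Iio u).indicator (fun t => ENNReal.ofReal (C * t ^ c)) t :=
        setLIntegral_mono' measurableSet_Ioi hmono
    _ = ENNReal.ofReal (∫ t in Ioo 0 u, C * t ^ c) := by
        rw [lintegral_indicator measurableSet_Iio, Measure.restrict_restrict measurableSet_Iio,
          Iio_inter_Ioi, ofReal_integral_eq_lintegral_ofReal hint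
            ((ae_restrict_iff' measurableSet_Ioo).2 (ae_of_all _ fun t ht => by
              have := ht.1; positivity))]
    _ = ENNReal.ofReal (C * u ^ (c + 1) / (c + 1)) := by
        rw [← integral_Ioc_eq_integral_Ioo, ← intervalIntegral.integral_of_le hu,
          intervalIntegral.integral_const_mul, integral_rpow (Or.inl hc),
          zero_rpow (by linarith), mul_div_assoc, sub_zero]

lemma measure_lt_sum_le {ι : Type*} (s : Finset ι) {X : ι → Ω → ℝ}
    (hX : ∀ i, Measurable (X i)) (hX0 : ∀ i a, 0 ≤ X i a) {u : ℝ} (hu : 0 < u) :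
    μ {a | u < ∑ i ∈ s, X i a} ≤ ∑ i ∈ s, μ {a | u < X i a}
      + (∑ i ∈ s, ∫⁻ a, ENNReal.ofReal (min (X i a) u) ∂μ) / ENNReal.ofReal u := by
  set T : Ω → ℝ≥0∞ := fun a => ∑ i ∈ s, ENNReal.ofReal (min (X i a) u)
  have hsub : {a | u < ∑ i ∈ s, X i a}
      ⊆ (⋃ i ∈ s, {a | u < X i a}) ∪ {a | ENNReal.ofReal u ≤ T a} := by
    intro a (ha : u < ∑ i ∈ s, X i a)
    by_cases hbig : ∃ i ∈ s, u < X i a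
    · obtain ⟨i, hi, hui⟩ := hbig
      exact Or.inl (mem_biUnion hi hui)
    · push Not at hbig
      right
      show ENNReal.ofReal u ≤ ∑ i ∈ s, ENNReal.ofReal (min (X i a) u)
      rw [← ENNReal.ofReal_sum_of_nonneg fun i _ => le_min (hX0 i a) hu.le,
        Finset.sum_congr rfl fun i hi => min_eq_left (hbig i hi)]
      exact ENNReal.ofReal_le_ofReal ha.le
  have hTm : Measurable T :=
    Finset.measurable_sum s fun i _ => ((hX i).min measurable_const).ennreal_ofReal
  have hT : ∫⁻ a, T a ∂μ = ∑ i ∈ s, ∫⁻ a, ENNReal.ofReal (min (X i a) u) ∂μ :=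
    lintegral_finsetSum _ fun i _ => ((hX i).min measurable_const).ennreal_ofReal
  calc μ {a | u < ∑ i ∈ s, X i a}
      ≤ μ (⋃ i ∈ s, {a | u < X i a}) + μ {a | ENNReal.ofReal u ≤ T a} :=
        (measure_mono hsub).trans (measure_union_le _ _)
    _ ≤ _ := by
        gcongr
        · exact measure_biUnion_finset_le _ _
        · rw [← hT]
          exact meas_ge_le_lintegral_div hTm.aemeasurable (by simpa using hu)
            ENNReal.ofReal_ne_top

section IdentDistrib

variable {Y : ℕ → Ω → ℝ} (hY_meas : ∀ i, Measurable (Y i))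
  (hY_ident : ∀ i, IdentDistrib (Y i) (Y 0) μ μ)
include hY_meas hY_ident

lemma measure_lt_sum_range_le (hY0 : ∀ i a, 0 ≤ Y i a) {C c : ℝ} (hC : 0 ≤ C) (hc : -1 < c)
    (htail : ∀ t, 0 < t → μ {a | t < Y 0 a} ≤ ENNReal.ofReal (C * t ^ c)) {u : ℝ} (hu : 0 < u)
    (n : ℕ) :
    μ {a | u < ∑ i ∈ Finset.range n, Y i a} ≤ ENNReal.ofReal ((C + C / (c + 1)) * n * u ^ c) := by
  have hc1 : 0 < c + 1 := by linarith
  have htail_i : ∀ i, μ {a | u < Y i a} ≤ ENNReal.ofReal (C * u ^ c) := fun i =>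
    ((hY_ident i).measure_mem_eq measurableSet_Ioi).trans_le (htail u hu)
  have hmean_i : ∀ i, ∫⁻ a, ENNReal.ofReal (min (Y i a) u) ∂μ
      ≤ ENNReal.ofReal (C * u ^ (c + 1) / (c + 1)) := fun i =>
    ((hY_ident i).comp (measurable_id.min measurable_const).ennreal_ofReal).lintegral_eq.trans_le
      (lintegral_ofReal_min_le_of_tail_le (hY_meas 0) (hY0 0) hC hc htail hu.le)
  calc μ {a | u < ∑ i ∈ Finset.range n, Y i a}
      ≤ ∑ i ∈ Finset.range n, μ {a | u < Y i a}
        + (∑ i ∈ Finset.range n, ∫⁻ a, ENNReal.ofReal (min (Y i a) u) ∂μ) / ENNReal.ofReal u :=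
        measure_lt_sum_le _ hY_meas hY0 hu
    _ ≤ n * ENNReal.ofReal (C * u ^ c)
        + n * ENNReal.ofReal (C * u ^ (c + 1) / (c + 1)) / ENNReal.ofReal u := by
        gcongr
        · exact (Finset.sum_le_sum fun i _ => htail_i i).trans_eq (by simp)
        · exact (Finset.sum_le_sum fun i _ => hmean_i i).trans_eq (by simp)
    _ = ENNReal.ofReal ((C + C / (c + 1)) * n * u ^ c) := by
        rw [← ENNReal.ofReal_natCast, ← ENNReal.ofReal_mul (by positivity),
          ← ENNReal.ofReal_mul (by positivity), ← ENNReal.ofReal_div_of_pos hu,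
          ← ENNReal.ofReal_add (by positivity) (by positivity),
          rpow_add hu, rpow_one]
        congr 1
        field_simp

lemma measure_biInter_le_le_exp_neg (hY_indep : iIndepFun Y μ) [IsProbabilityMeasure μ]
    (v : ℝ) (n : ℕ) :
    μ (⋂ i ∈ Finset.range n, {a | Y i a ≤ v})
      ≤ ENNReal.ofReal (exp (-(n * μ.real {a | v < Y 0 a}))) := by
  have hprod : μ (⋂ i ∈ Finset.range n, {a | Y i a ≤ v})
      = ∏ i ∈ Finset.range n, μ (Y i ⁻¹' Iic v) :=
    hY_indep.measure_inter_preimage_eq_mul _ (sets := fun _ => Iic v) fun _ _ => measurableSet_Iic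
  have hcompl : μ (Y 0 ⁻¹' Iic v) = ENNReal.ofReal (1 - μ.real {a | v < Y 0 a}) := by
    rw [← ofReal_measureReal, show Y 0 ⁻¹' Iic v = {a | v < Y 0 a}ᶜ by ext; simp,
      probReal_compl_eq_one_sub (s := {a | v < Y 0 a}) (hY_meas 0 measurableSet_Ioi)]
  calc μ (⋂ i ∈ Finset.range n, {a | Y i a ≤ v})
      = μ (Y 0 ⁻¹' Iic v) ^ n := by
        rw [hprod, Finset.prod_congr rfl fun i _ => (hY_ident i).measure_mem_eq measurableSet_Iic,
          Finset.prod_const, Finset.card_range]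
    _ ≤ ENNReal.ofReal (exp (- μ.real {a | v < Y 0 a})) ^ n := by
        rw [hcompl]; gcongr; exact one_sub_le_exp_neg _
    _ = ENNReal.ofReal (exp (-(n * μ.real {a | v < Y 0 a}))) := by
        rw [← ENNReal.ofReal_pow (exp_nonneg _), ← exp_nat_mul, mul_neg]

lemma ae_eventually_sum_range_two_pow_le [IsProbabilityMeasure μ] (hY0 : ∀ i a, 0 ≤ Y i a)
    {γ α : ℝ} (hγ0 : 0 < γ) (hγ1 : γ < 1) (hαγ : 1 < α * γ)
    (htail : Tendsto (fun y => log (μ.real {a | y < Y 0 a}) / log y) atTop (𝓝 (-γ))) :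
    ∀ᵐ a ∂μ, ∀ᶠ k in atTop, ∑ i ∈ Finset.range (2 ^ k), Y i a ≤ ((2 : ℝ) ^ k) ^ α := by
  have hα : 0 < α := pos_of_mul_pos_left (by linarith) hγ0.le
  have hαinv : α⁻¹ < γ := by rw [← one_div, div_lt_iff₀ hα]; linarith
  set c := -(γ + α⁻¹) / 2 with hc
  have hc1 : -1 < c := by linarith [inv_pos.2 hα]
  have hc1' : 0 < c + 1 := by linarith
  have hexp : 1 + α * c < 0 := by
    have : α * α⁻¹ = 1 := mul_inv_cancel₀ hα.ne'
    rw [hc]; nlinarith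
  obtain ⟨C, hC, hCt⟩ := exists_le_mul_rpow_of_eventually_le_rpow (fun _ => measureReal_le_one)
    (by linarith [inv_pos.2 hα])
    (eventually_le_rpow_of_tendsto_log_div_log (fun _ => measureReal_nonneg) htail
      (by linarith : -γ < c))
  have htail' : ∀ t, 0 < t → μ {a | t < Y 0 a} ≤ ENNReal.ofReal (C * t ^ c) := fun t ht => by
    rw [← ofReal_measureReal]
    exact ENNReal.ofReal_le_ofReal (hCt t ht)
  have hbound : ∀ k : ℕ, μ {a | ((2 : ℝ) ^ k) ^ α < ∑ i ∈ Finset.range (2 ^ k), Y i a}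
      ≤ ENNReal.ofReal ((C + C / (c + 1)) * ((2 : ℝ) ^ k) ^ (1 + α * c)) := fun k => by
    refine (measure_lt_sum_range_le hY_meas hY_ident hY0 hC hc1 htail' (by positivity)
      (2 ^ k)).trans_eq ?_
    rw [rpow_add (by positivity), rpow_one, rpow_mul (by positivity)]
    push_cast
    ring_nf
  have hsum : Summable fun k : ℕ => (C + C / (c + 1)) * ((2 : ℝ) ^ k) ^ (1 + α * c) :=
    (summable_two_pow_rpow hexp).mul_left _
  filter_upwards [ae_eventually_notMem_of_le_ofReal (fun k => by positivity) hsum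
    (Eventually.of_forall hbound)] with a ha
  exact ha.mono fun k hk => not_lt.1 hk

lemma ae_eventually_two_pow_rpow_le_sum_range [IsProbabilityMeasure μ] (hY_indep : iIndepFun Y μ)
    (hY0 : ∀ i a, 0 ≤ Y i a) {γ β : ℝ} (hγ : 0 < γ) (hβ : 0 < β) (hβγ : β * γ < 1)
    (htail : Tendsto (fun y => log (μ.real {a | y < Y 0 a}) / log y) atTop (𝓝 (-γ))) :
    ∀ᵐ a ∂μ, ∀ᶠ k in atTop, ((2 : ℝ) ^ k) ^ β ≤ ∑ i ∈ Finset.range (2 ^ k), Y i a := by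
  have hγinv : γ < β⁻¹ := by rw [← one_div, lt_div_iff₀ hβ]; linarith
  set d := -(γ + β⁻¹) / 2 with hd
  have hexp : 0 < 1 + β * d := by
    have : β * β⁻¹ = 1 := mul_inv_cancel₀ hβ.ne'
    rw [hd]; nlinarith
  have hv : Tendsto (fun k : ℕ => ((2 : ℝ) ^ k) ^ β) atTop atTop :=
    (tendsto_rpow_atTop hβ).comp (tendsto_pow_atTop_atTop_of_one_lt one_lt_two)
  have hp : ∀ᶠ k : ℕ in atTop, (((2 : ℝ) ^ k) ^ β) ^ d ≤ μ.real {a | ((2 : ℝ) ^ k) ^ β < Y 0 a} :=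
    hv.eventually (eventually_rpow_le_of_tendsto_log_div_log (fun _ => measureReal_nonneg) htail
      (by linarith) (by linarith))
  have hbound : ∀ᶠ k : ℕ in atTop, μ (⋂ i ∈ Finset.range (2 ^ k), {a | Y i a ≤ ((2 : ℝ) ^ k) ^ β})
      ≤ ENNReal.ofReal (((2 : ℝ) ^ k) ^ (-(1 + β * d))) := by
    filter_upwards [hp] with k hk
    refine (measure_biInter_le_le_exp_neg hY_meas hY_ident hY_indep _ _).trans
      (ENNReal.ofReal_le_ofReal ?_)
    have hnp : ((2 : ℝ) ^ k) ^ (1 + β * d)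
        ≤ ((2 ^ k : ℕ) : ℝ) * μ.real {a | ((2 : ℝ) ^ k) ^ β < Y 0 a} := by
      rw [rpow_add (by positivity), rpow_one, rpow_mul (by positivity)]
      push_cast
      gcongr
    calc exp (-(((2 ^ k : ℕ) : ℝ) * μ.real {a | ((2 : ℝ) ^ k) ^ β < Y 0 a}))
        ≤ (((2 ^ k : ℕ) : ℝ) * μ.real {a | ((2 : ℝ) ^ k) ^ β < Y 0 a})⁻¹ :=
          exp_neg_le_inv ((by positivity : (0 : ℝ) < _).trans_le hnp)
      _ ≤ (((2 : ℝ) ^ k) ^ (1 + β * d))⁻¹ := inv_anti₀ (by positivity) hnp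
      _ = ((2 : ℝ) ^ k) ^ (-(1 + β * d)) := (rpow_neg (by positivity) _).symm
  filter_upwards [ae_eventually_notMem_of_le_ofReal (fun _ => by positivity)
    (summable_two_pow_rpow (by linarith)) hbound] with a ha
  refine ha.mono fun k hk => ?_
  simp only [mem_iInter, not_forall] at hk
  obtain ⟨i, hi, hlt⟩ := hk
  exact (not_le.1 hlt).le.trans (Finset.single_le_sum (fun j _ => hY0 j a) hi)

end IdentDistrib

end Probability

lemma tendsto_log_mul_rpow_div_log {c : ℝ} (hc : 0 < c) (α : ℝ) :
    Tendsto (fun n : ℕ => log ((c * n) ^ α) / log n) atTop (𝓝 α) := by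
  have hlog : Tendsto (fun n : ℕ => log n) atTop atTop :=
    tendsto_log_atTop.comp tendsto_natCast_atTop_atTop
  have hlim : Tendsto (fun n : ℕ => α * (log c / log n + 1)) atTop (𝓝 α) := by
    simpa using ((tendsto_const_nhds (x := log c)).div_atTop hlog).add_const 1 |>.const_mul α
  refine hlim.congr' ?_
  filter_upwards [hlog.eventually_gt_atTop 0, eventually_gt_atTop 0] with n hn hn0
  rw [log_rpow (by positivity), log_mul hc.ne' (by positivity)]
  field_simp

section Deterministic

variable {s : ℕ → ℝ}

lemma eventually_le_two_mul_rpow_of_two_pow (hs : Monotone s) {α : ℝ} (hα : 0 ≤ α)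
    (h : ∀ᶠ k in atTop, s (2 ^ k) ≤ ((2 : ℝ) ^ k) ^ α) :
    ∀ᶠ n : ℕ in atTop, s n ≤ (2 * n) ^ α := by
  obtain ⟨K, hK⟩ := eventually_atTop.1 h
  filter_upwards [eventually_ge_atTop (2 ^ K)] with n hn
  have hn0 : n ≠ 0 := (Nat.two_pow_pos K).trans_le hn |>.ne'
  have hpow : (2 : ℝ) ^ Nat.log 2 n ≤ n := by exact_mod_cast Nat.pow_log_le_self 2 hn0
  calc s n ≤ s (2 ^ (Nat.log 2 n + 1)) := hs (Nat.lt_pow_succ_log_self one_lt_two n).le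
    _ ≤ ((2 : ℝ) ^ (Nat.log 2 n + 1)) ^ α :=
        hK _ ((Nat.le_log_of_pow_le one_lt_two hn).trans (Nat.le_succ _))
    _ ≤ (2 * n) ^ α := by rw [pow_succ']; gcongr

lemma eventually_inv_two_mul_rpow_le_of_two_pow (hs : Monotone s) {β : ℝ} (hβ : 0 ≤ β)
    (h : ∀ᶠ k in atTop, ((2 : ℝ) ^ k) ^ β ≤ s (2 ^ k)) :
    ∀ᶠ n : ℕ in atTop, (2⁻¹ * n) ^ β ≤ s n := by
  obtain ⟨K, hK⟩ := eventually_atTop.1 h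
  filter_upwards [eventually_ge_atTop (2 ^ K)] with n hn
  have hn0 : n ≠ 0 := (Nat.two_pow_pos K).trans_le hn |>.ne'
  have hpow : (n : ℝ) < 2 ^ (Nat.log 2 n + 1) := by
    exact_mod_cast Nat.lt_pow_succ_log_self one_lt_two n
  calc (2⁻¹ * n : ℝ) ^ β ≤ ((2 : ℝ) ^ Nat.log 2 n) ^ β := by
        gcongr; rw [pow_succ] at hpow; linarith
    _ ≤ s (2 ^ Nat.log 2 n) := hK _ (Nat.le_log_of_pow_le one_lt_two hn)
    _ ≤ s n := hs (Nat.pow_log_le_self 2 hn0)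

lemma eventually_log_div_log_lt_of_le_rpow {c : ℝ} (hc : 0 < c)
    (hs : ∀ᶠ n in atTop, 0 < s n) {α x : ℝ} (h : ∀ᶠ n in atTop, s n ≤ (c * n) ^ α) (hx : α < x) :
    ∀ᶠ n in atTop, log (s n) / log n < x := by
  filter_upwards [hs, h, (tendsto_log_mul_rpow_div_log hc α).eventually (gt_mem_nhds hx),
    eventually_gt_atTop 1] with n hpos hle hlt hn1
  have : 0 < log n := log_pos (by exact_mod_cast hn1)
  exact (div_le_div_of_nonneg_right (log_le_log hpos hle) this.le).trans_lt hlt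

lemma eventually_lt_log_div_log_of_rpow_le {c : ℝ} (hc : 0 < c) {β x : ℝ}
    (h : ∀ᶠ n in atTop, (c * n) ^ β ≤ s n) (hx : x < β) :
    ∀ᶠ n in atTop, x < log (s n) / log n := by
  filter_upwards [h, (tendsto_log_mul_rpow_div_log hc β).eventually (lt_mem_nhds hx),
    eventually_gt_atTop 1] with n hle hlt hn1
  have : 0 < log n := log_pos (by exact_mod_cast hn1)
  exact hlt.trans_le
    (div_le_div_of_nonneg_right (log_le_log (by positivity) hle) this.le)

lemma tendsto_log_div_log_of_two_pow (hs : Monotone s) (hpos : ∀ᶠ n in atTop, 0 < s n) {L : ℝ}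
    (hL : 0 < L)
    (hup : ∀ q : ℚ, L < q → ∀ᶠ k in atTop, s (2 ^ k) ≤ ((2 : ℝ) ^ k) ^ (q : ℝ))
    (hlow : ∀ q : ℚ, 0 < q → q < L → ∀ᶠ k in atTop, ((2 : ℝ) ^ k) ^ (q : ℝ) ≤ s (2 ^ k)) :
    Tendsto (fun n => log (s n) / log n) atTop (𝓝 L) := by
  refine tendsto_order.2 ⟨fun x hx => ?_, fun x hx => ?_⟩
  · obtain ⟨q, hxq, hqL⟩ := exists_rat_btwn (max_lt hx hL)
    have hq0 : (0 : ℝ) < q := (le_max_right _ _).trans_lt hxq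
    exact eventually_lt_log_div_log_of_rpow_le (by norm_num)
      (eventually_inv_two_mul_rpow_le_of_two_pow hs hq0.le
        (hlow q (by exact_mod_cast hq0) hqL)) ((le_max_left _ _).trans_lt hxq)
  · obtain ⟨q, hLq, hqx⟩ := exists_rat_btwn hx
    exact eventually_log_div_log_lt_of_le_rpow two_pos hpos
      (eventually_le_two_mul_rpow_of_two_pow hs (hL.trans hLq).le (hup q hLq)) hqx

end Deterministic

/-- For i.i.d. positive random variables with power-law-like tail of exponent `θ - 1` with
`θ ∈ (1,2)` (so infinite mean), almost surely `log (∑_{i<n} Y i) / log n → 1/(θ-1)`;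
equivalently the empirical mean is `n^{(2-θ)/(θ-1) + o(1)}`. -/
theorem stmt_11
    {Ω : Type*} [MeasureSpace Ω] [IsProbabilityMeasure (ℙ : Measure Ω)]
    (Y : ℕ → Ω → ℝ) (θ : ℝ) (hθ : θ ∈ Set.Ioo (1 : ℝ) 2)
    (hY_meas : ∀ i, Measurable (Y i))
    (hY_pos : ∀ i a, 0 < Y i a)
    (hY_indep : iIndepFun (m := fun _ => Real.measurableSpace) Y ℙ)
    (hY_ident : ∀ i, Measure.map (Y i) ℙ = Measure.map (Y 0) ℙ)
    (hY_tail : Tendsto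
      (fun y : ℝ => Real.log (ℙ {a : Ω | y < Y 0 a}).toReal / Real.log y)
      atTop (nhds (-(θ - 1)))) :
    ∀ᵐ a ∂(ℙ : Measure Ω),
      Tendsto
        (fun n : ℕ => Real.log (∑ i ∈ Finset.range n, Y i a) / Real.log n)
        atTop (nhds (1 / (θ - 1))) := by
  obtain ⟨hθ1, hθ2⟩ := hθ
  have hident : ∀ i, IdentDistrib (Y i) (Y 0) ℙ ℙ :=
    fun i => ⟨(hY_meas i).aemeasurable, (hY_meas 0).aemeasurable, hY_ident i⟩
  have hY0 : ∀ i a, 0 ≤ Y i a := fun i a => (hY_pos i a).le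
  have hL : 0 < 1 / (θ - 1) := one_div_pos.2 (by linarith)
  have hupper : ∀ᵐ a ∂(ℙ : Measure Ω), ∀ q : ℚ, 1 / (θ - 1) < q →
      ∀ᶠ k in atTop, ∑ i ∈ Finset.range (2 ^ k), Y i a ≤ ((2 : ℝ) ^ k) ^ (q : ℝ) :=
    ae_all_iff.2 fun q => eventually_imp_distrib_left.2 fun hq =>
      ae_eventually_sum_range_two_pow_le hY_meas hident hY0 (by linarith) (by linarith)
        (by rwa [div_lt_iff₀ (by linarith)] at hq) hY_tail
  have hlower : ∀ᵐ a ∂(ℙ : Measure Ω), ∀ q : ℚ, 0 < q → (q : ℝ) < 1 / (θ - 1) →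
      ∀ᶠ k in atTop, ((2 : ℝ) ^ k) ^ (q : ℝ) ≤ ∑ i ∈ Finset.range (2 ^ k), Y i a :=
    ae_all_iff.2 fun q => eventually_imp_distrib_left.2 fun hq0 =>
      eventually_imp_distrib_left.2 fun hq =>
        ae_eventually_two_pow_rpow_le_sum_range hY_meas hident hY_indep hY0 (by linarith)
          (by exact_mod_cast hq0) (by rwa [lt_div_iff₀ (by linarith)] at hq) hY_tail
  filter_upwards [hupper, hlower] with a hupper hlower
  refine tendsto_log_div_log_of_two_pow (fun m n hmn => ?_) ?_ hL hupper hlower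
  · exact Finset.sum_le_sum_of_subset_of_nonneg (Finset.range_subset_range.2 hmn)
      fun i _ _ => hY0 i a
  · exact eventually_ge_atTop 1 |>.mono fun n hn =>
      Finset.sum_pos (fun i _ => hY_pos i a) (Finset.nonempty_range_iff.2 (by omega))
end

section
/- Let γ > 1, β > 1 and φ(ω) = (γ−1)ω^{−γ} on [1,∞). Then F⁻¹(1 − 1/n) = n^{1/(γ−1)} for every n ≥ 1, and the truncated integral is given exactly by ∫₁^{F⁻¹(1−1/n)} φ(ω)^{1−β} dω = [(γ−1)^{1−β}/(γ(β−1)+1)]·(n^{(γ(β−1)+1)/(γ−1)} − 1). In particular lim_{n→∞} ln(∫₁^{F⁻¹(1−1/n)} φ^{1−β}(ω)dω)/ln n = (γ/(γ−1))·(β − 1 + 1/γ) (Lemma 3 iii). -/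
open MeasureTheory Filter intervalIntegral

/-!
The density integrates to `F z = 1 - z^{1-γ}`, so solving `F z = 1 - 1/n` gives
`F⁻¹(1 - 1/n) = n^{1/(γ-1)}`. On `[1, ∞)` the integrand `φ^{1-β}` is the monomial
`(γ-1)^{1-β} ω^{γ(β-1)}`, whose integral up to `n^{1/(γ-1)}` is `C (n^a - 1)` with
`a = (γ(β-1)+1)/(γ-1) > 0`. Finally `log (C (n^a - 1)) = a log n + log C + log (1 - n^{-a})`,
and the last two terms stay bounded.
-/

lemma integral_one_of_eq_mul_rpow {f : ℝ → ℝ} {c r z : ℝ} (hz : 1 ≤ z) (hr : r ≠ -1)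
    (hf : ∀ t, 1 ≤ t → f t = c * t ^ r) :
    ∫ t in (1 : ℝ)..z, f t = c * ((z ^ (r + 1) - 1) / (r + 1)) := by
  have hzero : (0 : ℝ) ∉ Set.uIcc 1 z := by
    rw [Set.uIcc_of_le hz]
    exact fun h => by linarith [h.1]
  rw [integral_congr (g := fun t => c * t ^ r) fun t ht => hf t (Set.uIcc_of_le hz ▸ ht).1,
    intervalIntegral.integral_const_mul, integral_rpow (Or.inr ⟨hr, hzero⟩), Real.one_rpow]

lemma integral_one_powerLaw {φ : ℝ → ℝ} {γ z : ℝ} (hγ : γ ≠ 1) (hz : 1 ≤ z)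
    (hφ : ∀ x, 1 ≤ x → φ x = (γ - 1) * x ^ (-γ)) :
    ∫ t in (1 : ℝ)..z, φ t = 1 - z ^ (1 - γ) := by
  have hγ' : 1 - γ ≠ 0 := sub_ne_zero.mpr hγ.symm
  rw [integral_one_of_eq_mul_rpow hz (by contrapose! hγ; linarith) hφ, neg_add_eq_sub]
  field_simp
  ring

lemma integral_one_powerLaw_rpow {φ : ℝ → ℝ} {γ β z : ℝ} (hγ : 1 ≤ γ)
    (hβ : γ * (β - 1) + 1 ≠ 0) (hz : 1 ≤ z) (hφ : ∀ x, 1 ≤ x → φ x = (γ - 1) * x ^ (-γ)) :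
    ∫ t in (1 : ℝ)..z, φ t ^ (1 - β)
      = (γ - 1) ^ (1 - β) / (γ * (β - 1) + 1) * (z ^ (γ * (β - 1) + 1) - 1) := by
  have hmonomial : ∀ t, 1 ≤ t → φ t ^ (1 - β) = (γ - 1) ^ (1 - β) * t ^ (γ * (β - 1)) := by
    intro t ht
    have ht0 : 0 ≤ t := by linarith
    rw [hφ t ht, Real.mul_rpow (by linarith) (Real.rpow_nonneg ht0 _), ← Real.rpow_mul ht0]
    ring_nf
  rw [integral_one_of_eq_mul_rpow hz (by contrapose! hβ; linarith) hmonomial]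
  ring

lemma powerLaw_quantile {γ x : ℝ} {n : ℕ} (hγ : γ ≠ 1) (hx : 0 ≤ x)
    (hFx : 1 - x ^ (1 - γ) = 1 - 1 / n) : x = (n : ℝ) ^ (1 / (γ - 1)) := by
  have hn : (0 : ℝ) ≤ (n : ℝ)⁻¹ := by positivity
  have hpow : x = ((n : ℝ)⁻¹) ^ (1 - γ)⁻¹ :=
    (Real.eq_rpow_inv hx hn (sub_ne_zero.mpr hγ.symm)).mpr (by linarith [one_div (n : ℝ)])
  rw [hpow, Real.inv_rpow (Nat.cast_nonneg n), ← Real.rpow_neg (Nat.cast_nonneg n), ← inv_neg,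
    neg_sub, one_div]

lemma tendsto_log_mul_rpow_sub_one_div_log {C a : ℝ} (hC : C ≠ 0) (ha : 0 < a) :
    Tendsto (fun x : ℝ => Real.log (C * (x ^ a - 1)) / Real.log x) atTop (nhds a) := by
  have hsmall : Tendsto (fun x : ℝ => Real.log C + Real.log (1 - x ^ (-a))) atTop
      (nhds (Real.log C + Real.log (1 - 0))) :=
    tendsto_const_nhds.add <| ((Real.continuousAt_log (by norm_num)).tendsto).comp
      (tendsto_const_nhds.sub (tendsto_rpow_neg_atTop ha))
  have hlim := (hsmall.div_atTop Real.tendsto_log_atTop).add_const a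
  rw [zero_add] at hlim
  refine hlim.congr' ?_
  filter_upwards [eventually_gt_atTop 1] with x hx
  have hx0 : 0 < x := by linarith
  have hxa : 1 < x ^ a := Real.one_lt_rpow hx ha
  have hfactor : x ^ a - 1 = x ^ a * (1 - x ^ (-a)) := by
    rw [mul_sub, mul_one, ← Real.rpow_add hx0, add_neg_cancel, Real.rpow_zero]
  have hrest : 1 - x ^ (-a) ≠ 0 := by
    rw [Real.rpow_neg hx0.le]
    linarith [inv_lt_one_of_one_lt₀ hxa]
  have hlog : Real.log x ≠ 0 := (Real.log_pos hx).ne'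
  rw [hfactor, Real.log_mul hC (by positivity), Real.log_mul (by positivity) hrest,
    Real.log_rpow hx0]
  field_simp
  ring

theorem stmt_13_general
    (γ β : ℝ) (hγ : 1 < γ) (hβ : 1 < β)
    (φ : ℝ → ℝ)
    (hφ : ∀ x : ℝ, 1 ≤ x → φ x = (γ - 1) * x ^ (-γ))
    (Finv : ℝ → ℝ)
    (hFinv_mem : ∀ u ∈ Set.Ico (0 : ℝ) 1, 1 ≤ Finv u)
    (hFinv : ∀ u ∈ Set.Ico (0 : ℝ) 1, (∫ t in (1 : ℝ)..(Finv u), φ t) = u) :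
    (∀ n : ℕ, 1 ≤ n → Finv (1 - 1 / (n : ℝ)) = (n : ℝ) ^ (1 / (γ - 1)))
      ∧ (∀ n : ℕ, 1 ≤ n →
          (∫ t in (1 : ℝ)..(Finv (1 - 1 / (n : ℝ))), φ t ^ (1 - β))
            = ((γ - 1) ^ (1 - β) / (γ * (β - 1) + 1))
                * ((n : ℝ) ^ ((γ * (β - 1) + 1) / (γ - 1)) - 1))
      ∧ Tendsto
          (fun n : ℕ =>
            Real.log (∫ t in (1 : ℝ)..(Finv (1 - 1 / (n : ℝ))), φ t ^ (1 - β))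
              / Real.log n)
          atTop (nhds ((γ / (γ - 1)) * (β - 1 + 1 / γ))) := by
  have hγ1 : 0 < γ - 1 := by linarith
  have hden : 0 < γ * (β - 1) + 1 := by nlinarith
  have hquantile : ∀ n : ℕ, 1 ≤ n → Finv (1 - 1 / (n : ℝ)) = (n : ℝ) ^ (1 / (γ - 1)) := by
    intro n hn
    have hu : 1 - 1 / (n : ℝ) ∈ Set.Ico (0 : ℝ) 1 := by
      have hn' : (1 : ℝ) ≤ n := by exact_mod_cast hn
      constructor
      · linarith [(div_le_one (by linarith : (0 : ℝ) < n)).mpr hn']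
      · linarith [one_div_pos.mpr (by linarith : (0 : ℝ) < n)]
    have hmem := hFinv_mem _ hu
    refine powerLaw_quantile hγ.ne' (by linarith) ?_
    rw [← integral_one_powerLaw hγ.ne' hmem hφ, hFinv _ hu]
  have hintegral : ∀ n : ℕ, 1 ≤ n → ∫ t in (1 : ℝ)..(Finv (1 - 1 / (n : ℝ))), φ t ^ (1 - β)
      = (γ - 1) ^ (1 - β) / (γ * (β - 1) + 1) * ((n : ℝ) ^ ((γ * (β - 1) + 1) / (γ - 1)) - 1) := by
    intro n hn
    rw [hquantile n hn, integral_one_powerLaw_rpow hγ.le hden.ne'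
      (Real.one_le_rpow (by exact_mod_cast hn) (by positivity)) hφ,
      ← Real.rpow_mul (Nat.cast_nonneg n), one_div_mul_eq_div]
  have hexponent : γ / (γ - 1) * (β - 1 + 1 / γ) = (γ * (β - 1) + 1) / (γ - 1) := by
    field_simp
  refine ⟨hquantile, hintegral, ?_⟩
  rw [hexponent]
  refine ((tendsto_log_mul_rpow_sub_one_div_log (C := (γ - 1) ^ (1 - β) / (γ * (β - 1) + 1))
    (by positivity) (by positivity)).comp
    tendsto_natCast_atTop_atTop).congr' ?_
  filter_upwards [eventually_ge_atTop 1] with n hn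
  rw [Function.comp_apply, hintegral n hn]

/-- **Lemma 3 iii.** For the exact power law `φ(ω) = (γ-1) ω^{-γ}` (`γ > 1`) and `β > 1`:
`F⁻¹(1 - 1/n) = n^{1/(γ-1)}` for all `n ≥ 1`, the truncated integral equals
`((γ-1)^{1-β}/(γ(β-1)+1)) (n^{(γ(β-1)+1)/(γ-1)} - 1)` exactly, and consequently
`log (∫₁^{F⁻¹(1-1/n)} φ^{1-β}) / log n → (γ/(γ-1)) (β - 1 + 1/γ)`. -/
theorem stmt_13
    (γ β : ℝ) (hγ : 1 < γ) (hβ : 1 < β)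
    (φ : ℝ → ℝ)
    (hφ : ∀ x : ℝ, 1 ≤ x → φ x = (γ - 1) * x ^ (-γ))
    (hφ_supp : ∀ x : ℝ, x < 1 → φ x = 0)
    (Finv : ℝ → ℝ)
    (hFinv_mem : ∀ u ∈ Set.Ico (0 : ℝ) 1, 1 ≤ Finv u)
    (hFinv : ∀ u ∈ Set.Ico (0 : ℝ) 1, (∫ t in (1 : ℝ)..(Finv u), φ t) = u) :
    (∀ n : ℕ, 1 ≤ n → Finv (1 - 1 / (n : ℝ)) = (n : ℝ) ^ (1 / (γ - 1)))
      ∧ (∀ n : ℕ, 1 ≤ n →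
          (∫ t in (1 : ℝ)..(Finv (1 - 1 / (n : ℝ))), φ t ^ (1 - β))
            = ((γ - 1) ^ (1 - β) / (γ * (β - 1) + 1))
                * ((n : ℝ) ^ ((γ * (β - 1) + 1) / (γ - 1)) - 1))
      ∧ Tendsto
          (fun n : ℕ =>
            Real.log (∫ t in (1 : ℝ)..(Finv (1 - 1 / (n : ℝ))), φ t ^ (1 - β))
              / Real.log n)
          atTop (nhds ((γ / (γ - 1)) * (β - 1 + 1 / γ))) :=
  stmt_13_general γ β hγ hβ φ hφ Finv hFinv_mem hFinv
end

section
/- Let A > 0 and A₂ > 0, set z := A₂/A², and define S(k) := A^k·(f_X(k,z) + f_Y(k,z)) for k ≥ 1, where f_X, f_Y are given by the recursion f_X(1,z)=1+z, f_Y(1,z)=2, f_X(k+1,z)=f_X(k,z)+z f_Y(k,z), f_Y(k+1,z)=f_X(k,z)+f_Y(k,z). Then there is a constant C > 0 such that lim_{k→∞} S(k)/(A+√A₂)^k = C; in particular lim_{k→∞} S(k)^{1/k} = A + √A₂. -/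
/-!
Put `w = √A₂ / A`, so that `z = w²`. The recursion is linear with eigenvalues `1 ± w`, and the
combinations `f_X(k) ± w f_Y(k)` are exactly `(1 ± w)^(k+1)`. Solving for `f_X + f_Y` gives
`S(k) = c (A + √A₂)^k + d (A - √A₂)^k` with `c = (1 + w)² / (2w) > 0`. Since
`|A - √A₂| < A + √A₂`, the second term is negligible, so `S(k) / (A + √A₂)^k → c`, and taking
`k`-th roots gives the growth rate.
-/

open Filter Topology

lemma add_mul_eq_pow_of_rec {z w : ℝ} (hw : w ^ 2 = z) {fX fY : ℕ → ℝ}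
    (hX1 : fX 1 = 1 + z) (hY1 : fY 1 = 2)
    (hrec : ∀ k : ℕ, 1 ≤ k → fX (k + 1) = fX k + z * fY k ∧ fY (k + 1) = fX k + fY k) :
    ∀ k : ℕ, 1 ≤ k → fX k + w * fY k = (1 + w) ^ (k + 1) := by
  intro k hk
  induction k, hk using Nat.le_induction with
  | base => rw [hX1, hY1, ← hw]; ring
  | succ k hk ih =>
    obtain ⟨hX, hY⟩ := hrec k hk
    rw [hX, hY, pow_succ, ← ih, ← hw]
    ring

lemma tendsto_div_pow_of_eventually_eq_add {S : ℕ → ℝ} {c d L M : ℝ} (hML : |M| < L)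
    (hS : ∀ᶠ k in atTop, S k = c * L ^ k + d * M ^ k) :
    Tendsto (fun k => S k / L ^ k) atTop (𝓝 c) := by
  have hL : 0 < L := (abs_nonneg M).trans_lt hML
  have hratio : |M / L| < 1 := by rwa [abs_div, abs_of_pos hL, div_lt_one hL]
  have hlim : Tendsto (fun k => c + d * (M / L) ^ k) atTop (𝓝 (c + d * 0)) :=
    tendsto_const_nhds.add
      (tendsto_const_nhds.mul (tendsto_pow_atTop_nhds_zero_of_abs_lt_one hratio))
  rw [mul_zero, add_zero] at hlim
  refine hlim.congr' ?_
  filter_upwards [hS] with k hk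
  rw [hk, div_pow]
  field_simp

lemma tendsto_rpow_inv_of_tendsto_div_pow {S : ℕ → ℝ} {L C : ℝ} (hL : 0 < L) (hC : 0 < C)
    (h : Tendsto (fun k => S k / L ^ k) atTop (𝓝 C)) :
    Tendsto (fun k : ℕ => S k ^ ((k : ℝ)⁻¹)) atTop (𝓝 L) := by
  have hinv : Tendsto (fun k : ℕ => (k : ℝ)⁻¹) atTop (𝓝 0) :=
    tendsto_inv_atTop_zero.comp tendsto_natCast_atTop_atTop
  have hroot : Tendsto (fun k : ℕ => (S k / L ^ k) ^ ((k : ℝ)⁻¹) * L) atTop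
      (𝓝 (C ^ (0 : ℝ) * L)) :=
    (h.rpow hinv (Or.inl hC.ne')).mul_const L
  rw [Real.rpow_zero, one_mul] at hroot
  refine hroot.congr' ?_
  filter_upwards [eventually_ge_atTop 1, h.eventually (eventually_gt_nhds hC)] with k hk hpos
  have hLk : 0 < L ^ k := pow_pos hL k
  conv_rhs => rw [← div_mul_cancel₀ (S k) hLk.ne']
  rw [Real.mul_rpow hpos.le hLk.le, Real.pow_rpow_inv_natCast hL.le (by omega)]

/-- For `A, A₂ > 0` and `z = A₂ / A²`, the quantity
`S(k) = A^k (f_X(k,z) + f_Y(k,z)) = ∑_m C_m^{(k)} A₂^m A^{k-2m}` (with `f_X, f_Y` defined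
by the Markov-chain recursion) satisfies `S(k) / (A + √A₂)^k → C` for some constant
`C > 0`; in particular `S(k)^{1/k} → A + √A₂`. -/
theorem stmt_15
    (A A₂ : ℝ) (hA : 0 < A) (hA₂ : 0 < A₂)
    (z : ℝ) (hz : z = A₂ / A ^ 2)
    (fX fY : ℕ → ℝ)
    (hX1 : fX 1 = 1 + z) (hY1 : fY 1 = 2)
    (hrec : ∀ k : ℕ, 1 ≤ k →
      fX (k + 1) = fX k + z * fY k ∧ fY (k + 1) = fX k + fY k)
    (S : ℕ → ℝ) (hS : ∀ k, S k = A ^ k * (fX k + fY k)) :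
    (∃ C : ℝ, 0 < C ∧
        Tendsto (fun k : ℕ => S k / (A + Real.sqrt A₂) ^ k) atTop (nhds C))
      ∧ Tendsto (fun k : ℕ => S k ^ ((k : ℝ)⁻¹)) atTop
          (nhds (A + Real.sqrt A₂)) := by
  have hsqrt : 0 < Real.sqrt A₂ := Real.sqrt_pos.mpr hA₂
  set w := Real.sqrt A₂ / A
  have hw : 0 < w := div_pos hsqrt hA
  have hw2 : w ^ 2 = z := by rw [hz, div_pow, Real.sq_sqrt hA₂.le]
  have hplus := add_mul_eq_pow_of_rec hw2 hX1 hY1 hrec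
  have hminus := add_mul_eq_pow_of_rec (w := -w) (by rw [neg_sq, hw2]) hX1 hY1 hrec
  have hsum : A + Real.sqrt A₂ = A * (1 + w) := by rw [mul_one_add, mul_div_cancel₀ _ hA.ne']
  have hdiff : A - Real.sqrt A₂ = A * (1 - w) := by rw [mul_one_sub, mul_div_cancel₀ _ hA.ne']
  clear_value w
  have hclosed : ∀ᶠ k in atTop, S k = (1 + w) ^ 2 / (2 * w) * (A + Real.sqrt A₂) ^ k
      + -(1 - w) ^ 2 / (2 * w) * (A - Real.sqrt A₂) ^ k := by
    filter_upwards [eventually_ge_atTop 1] with k hk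
    rw [hS, hsum, hdiff, mul_pow, mul_pow]
    field_simp
    -- `2w (f_X + f_Y) = (1 + w)(f_X + w f_Y) - (1 - w)(f_X - w f_Y)`
    linear_combination (1 + w) * hplus k hk + (w - 1) * hminus k hk
  have hdom : |A - Real.sqrt A₂| < A + Real.sqrt A₂ := by
    rw [abs_sub_lt_iff]; constructor <;> linarith
  have hlim := tendsto_div_pow_of_eventually_eq_add hdom hclosed
  have hC : 0 < (1 + w) ^ 2 / (2 * w) := by positivity
  exact ⟨⟨_, hC, hlim⟩, tendsto_rpow_inv_of_tendsto_div_pow (by positivity) hC hlim⟩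
end
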